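/- arXiv:1707.05491 — 8 statements merged into one kernel-verified Lean document; each statement's English description precedes it below -/
import Mathlib

section
/- Let X be a nonempty finite set and let ≤₁ and ≤₂ be two quasi-orders (reflexive and transitive relations) on X. Suppose that every pair of distinct elements of X is comparable with respect to ≤₁ or with respect to ≤₂. Then there exists an element x ∈ X such that for every y ∈ X, either x ≤₁ y or x ≤₂ y. -/
/-- Auxiliary induction (on an upper bound for the cardinality) for the
Sands–Sauer–Woodrow bi-ranking lemma. -/
theorem ssw_aux : ∀ (n : ℕ) (X : Type*) [Finite X] [Nonempty X]
    (le₁ le₂ : X → X → Prop), Nat.card X ≤ n →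
    Reflexive le₁ → Transitive le₁ → Reflexive le₂ → Transitive le₂ →
    (∀ a b : X, a ≠ b → le₁ a b ∨ le₁ b a ∨ le₂ a b ∨ le₂ b a) →
    ∃ x : X, ∀ y : X, le₁ x y ∨ le₂ x y := by
  intro n
  induction n with
  | zero =>
    intro X _ _ _ _ hcard _ _ _ _ _
    have := Nat.card_pos (α := X)
    omega
  | succ n ih =>
    intro X _ _ le₁ le₂ hcard h1r h1t h2r h2t hcomp
    classical
    -- strict versions of the two orders are well-founded on a finite type
    have wf1 : WellFounded (fun a b : X => le₁ a b ∧ ¬ le₁ b a) := by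
      letI : IsTrans X (fun a b : X => le₁ a b ∧ ¬ le₁ b a) :=
        ⟨fun a b c hab hbc => ⟨h1t hab.1 hbc.1, fun h => hbc.2 (h1t h hab.1)⟩⟩
      letI : IsIrrefl X (fun a b : X => le₁ a b ∧ ¬ le₁ b a) :=
        ⟨fun a h => h.2 h.1⟩
      exact Finite.wellFounded_of_trans_of_irrefl _
    have wf2 : WellFounded (fun a b : X => le₂ a b ∧ ¬ le₂ b a) := by
      letI : IsTrans X (fun a b : X => le₂ a b ∧ ¬ le₂ b a) :=
        ⟨fun a b c hab hbc => ⟨h2t hab.1 hbc.1, fun h => hbc.2 (h2t h hab.1)⟩⟩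
      letI : IsIrrefl X (fun a b : X => le₂ a b ∧ ¬ le₂ b a) :=
        ⟨fun a h => h.2 h.1⟩
      exact Finite.wellFounded_of_trans_of_irrefl _
    -- key step: any `t` all of whose uncovered elements are strictly `le₂`-below it
    -- can be improved to a full dominator
    have key : ∀ t : X, (∀ y : X, ¬ (le₁ t y ∨ le₂ t y) → le₂ y t) →
        ∃ x : X, ∀ y : X, le₁ x y ∨ le₂ x y := by
      intro t
      induction t using wf2.induction with
      | _ t IH =>
        intro hInv
        by_cases hdom : ∀ y : X, le₁ t y ∨ le₂ t y
        · exact ⟨t, hdom⟩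
        · push_neg at hdom
          obtain ⟨z, hz⟩ := hdom
          have hz' : ¬ (le₁ t z ∨ le₂ t z) := by tauto
          -- the set of uncovered elements
          set U : Set X := {y | ¬ (le₁ t y ∨ le₂ t y)} with hUdef
          have hzU : z ∈ U := hz'
          have htU : t ∉ U := fun h => h (Or.inl (h1r t))
          haveI : Nonempty U := ⟨⟨z, hzU⟩⟩
          have hlt : Nat.card U < Nat.card X := by
            have hss : U ⊂ Set.univ := by
              refine Set.ssubset_univ_iff.2 ?_
              intro h
              exact htU (h ▸ Set.mem_univ t)
            calc Nat.card U = U.ncard := (Nat.card_coe_set_eq U)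
              _ < (Set.univ : Set X).ncard := Set.ncard_lt_ncard hss Set.finite_univ
              _ = Nat.card X := Set.ncard_univ X
          -- apply the cardinality induction hypothesis to U
          obtain ⟨x', hx'⟩ := ih U
            (fun a b => le₁ a.1 b.1) (fun a b => le₂ a.1 b.1)
            (by omega)
            (fun a => h1r a.1) (fun {a b c} hab hbc => h1t hab hbc)
            (fun a => h2r a.1) (fun {a b c} hab hbc => h2t hab hbc)
            (fun a b hab => hcomp a.1 b.1 (fun h => hab (Subtype.ext h)))
          set t' : X := x'.1 with ht'def
          have ht'U : t' ∈ U := x'.2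
          have hcov : ∀ y, y ∈ U → le₁ t' y ∨ le₂ t' y := fun y hy => hx' ⟨y, hy⟩
          have h2t't : le₂ t' t := hInv t' ht'U
          have hnt : ¬ le₂ t t' := fun h => ht'U (Or.inr h)
          -- t' is strictly le₂-below t; establish the invariant for t'
          refine IH t' ⟨h2t't, hnt⟩ ?_
          intro y hy
          have hyU : y ∉ U := fun h => hy (hcov y h)
          have hty : le₁ t y ∨ le₂ t y := not_not.1 hyU
          have h1ty : le₁ t y := by
            rcases hty with h | h
            · exact h
            · exact absurd (Or.inr (h2t h2t't h)) hy
          have hyt' : y ≠ t' := by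
            intro h
            exact hy (h ▸ Or.inl (h1r y))
          rcases hcomp y t' hyt' with h | h | h | h
          · exact absurd (Or.inl (h1t h1ty h)) (ht'U ·)
          · exact absurd (Or.inl h) hy
          · exact h
          · exact absurd (Or.inr h) hy
    -- start from a le₁-minimal element
    obtain ⟨t₀, -, hmin⟩ := wf1.has_min Set.univ Set.univ_nonempty
    refine key t₀ ?_
    intro y hy
    have hyt : y ≠ t₀ := by
      intro h
      exact hy (h ▸ Or.inl (h1r y))
    rcases hcomp y t₀ hyt with h | h | h | h
    · by_cases h' : le₁ t₀ y
      · exact absurd (Or.inl h') hy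
      · exact absurd ⟨h, h'⟩ (hmin y (Set.mem_univ y))
    · exact absurd (Or.inl h) hy
    · exact h
    · exact absurd (Or.inr h) hy

/-- Bi-ranking lemma: given two quasi-orders on a nonempty finite set such that every
pair of distinct elements is comparable in at least one of them, there is an element
below every other element in at least one of the two quasi-orders. -/
theorem statement_0 {X : Type*} [Finite X] [Nonempty X]
    (le₁ le₂ : X → X → Prop)
    (h₁refl : Reflexive le₁) (h₁trans : Transitive le₁)
    (h₂refl : Reflexive le₂) (h₂trans : Transitive le₂)
    (hcomp : ∀ a b : X, a ≠ b → le₁ a b ∨ le₁ b a ∨ le₂ a b ∨ le₂ b a) :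
    ∃ x : X, ∀ y : X, le₁ x y ∨ le₂ x y :=
  ssw_aux (Nat.card X) X le₁ le₂ le_rfl h₁refl h₁trans h₂refl h₂trans hcomp
end

section
/- Let G be a finite simple graph and let S₁ and S₂ be two minimal separators in G. If S₂ intersects at least two connected components of G − S₁, then S₁ intersects at least two connected components of G − S₂. -/
open SimpleGraph

variable {V : Type*}

/-- `D` is (the vertex set of) a connected component of `G - S`. -/
def IsCompOf (G : SimpleGraph V) (S D : Set V) : Prop :=
  D.Nonempty ∧ Disjoint D S ∧ (G.induce D).Connected ∧
    ∀ v ∈ D, ∀ w : V, G.Adj v w → w ∉ S → w ∈ D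

/-- The open neighborhood `N(D)` of a vertex set `D`. -/
def nbhd (G : SimpleGraph V) (D : Set V) : Set V :=
  {v | v ∉ D ∧ ∃ d ∈ D, G.Adj v d}

/-- The closed neighborhood `N[D]` of a vertex set `D`. -/
def closedNbhd (G : SimpleGraph V) (D : Set V) : Set V :=
  D ∪ nbhd G D

/-- `D` is full to `S`: every vertex of `S` has a neighbor in `D`. -/
def FullTo (G : SimpleGraph V) (S D : Set V) : Prop :=
  ∀ s ∈ S, ∃ d ∈ D, G.Adj s d

/-- `S` is a minimal separator: `G - S` has at least two components full to `S`. -/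
def IsMinSep (G : SimpleGraph V) (S : Set V) : Prop :=
  ∃ D₁ D₂ : Set V, IsCompOf G S D₁ ∧ IsCompOf G S D₂ ∧ D₁ ≠ D₂ ∧
    FullTo G S D₁ ∧ FullTo G S D₂

/-- `S₁` crosses `S₂`: `S₂` intersects at least two connected components of `G - S₁`. -/
def Crosses (G : SimpleGraph V) (S₁ S₂ : Set V) : Prop :=
  ∃ D D' : Set V, IsCompOf G S₁ D ∧ IsCompOf G S₁ D' ∧ D ≠ D' ∧
    (S₂ ∩ D).Nonempty ∧ (S₂ ∩ D').Nonempty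

lemma walk_in_comp {G : SimpleGraph V} {S D C : Set V}
    (hD : IsCompOf G S D) (hdisj : Disjoint C S)
    (u v : C) (w : (G.induce C).Walk u v) (hu : (u : V) ∈ D) : (v : V) ∈ D := by
  induction w with
  | nil => exact hu
  | @cons a b c hab _ ih =>
    exact ih (hD.2.2.2 a hu b (by simpa using hab) (Set.disjoint_left.mp hdisj b.2))

lemma reach_in_comp {G : SimpleGraph V} {S D C : Set V}
    (hD : IsCompOf G S D) (hdisj : Disjoint C S)
    (hC : (G.induce C).Connected) {u v : V} (huC : u ∈ C) (hvC : v ∈ C)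
    (hu : u ∈ D) : v ∈ D := by
  obtain ⟨w⟩ := hC.preconnected ⟨u, huC⟩ ⟨v, hvC⟩
  exact walk_in_comp hD hdisj _ _ w hu

lemma comp_eq {G : SimpleGraph V} {S D D' : Set V}
    (hD : IsCompOf G S D) (hD' : IsCompOf G S D') {v : V}
    (hv : v ∈ D) (hv' : v ∈ D') : D = D' := by
  apply Set.Subset.antisymm
  · intro u hu
    exact reach_in_comp hD' hD.2.1 hD.2.2.1 hv hu hv'
  · intro u hu
    exact reach_in_comp hD hD'.2.1 hD'.2.2.1 hv' hu hv

lemma sep_hits_comp {G : SimpleGraph V} {S₁ S₂ D D' C : Set V}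
    (hD : IsCompOf G S₁ D) (hD' : IsCompOf G S₁ D') (hne : D ≠ D')
    (hC : IsCompOf G S₂ C) (hfull : FullTo G S₂ C)
    {x y : V} (hx₂ : x ∈ S₂) (hy₂ : y ∈ S₂) (hxD : x ∈ D) (hyD' : y ∈ D') :
    (S₁ ∩ C).Nonempty := by
  by_contra hemp
  have hdisj : Disjoint C S₁ := by
    rw [Set.disjoint_right]
    intro a haS haC
    exact hemp ⟨a, haS, haC⟩
  obtain ⟨u, huC, hxu⟩ := hfull x hx₂
  obtain ⟨v, hvC, hyv⟩ := hfull y hy₂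
  have huD : u ∈ D := hD.2.2.2 x hxD u hxu (Set.disjoint_left.mp hdisj huC)
  have hvD : v ∈ D := reach_in_comp hD hdisj hC.2.2.1 huC hvC huD
  have hyS₁ : y ∉ S₁ := Set.disjoint_left.mp hD'.2.1 hyD'
  have hyD : y ∈ D := hD.2.2.2 v hvD y hyv.symm hyS₁
  exact hne (comp_eq hD hD' hyD hyD')

/-- Crossing of minimal separators is symmetric. -/
theorem statement_1 [Fintype V] (G : SimpleGraph V) (S₁ S₂ : Set V)
    (h₁ : IsMinSep G S₁) (h₂ : IsMinSep G S₂)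
    (h : Crosses G S₁ S₂) :
    Crosses G S₂ S₁ := by
  obtain ⟨C₁, C₂, hC₁, hC₂, hCne, hf₁, hf₂⟩ := h₂
  obtain ⟨D, D', hD, hD', hDne, ⟨x, hx₂, hxD⟩, ⟨y, hy₂, hyD'⟩⟩ := h
  exact ⟨C₁, C₂, hC₁, hC₂, hCne,
    sep_hits_comp hD hD' hDne hC₁ hf₁ hx₂ hy₂ hxD hyD',
    sep_hits_comp hD hD' hDne hC₂ hf₂ hx₂ hy₂ hxD hyD'⟩
end

section
/- A finite simple graph G is chordal if and only if every minimal separator of G is a clique. -/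
open SimpleGraph

variable {V : Type*}

/-- A graph is chordal if it has no induced cycle of length at least 4. -/
def IsChordal (G : SimpleGraph V) : Prop :=
  ∀ n : ℕ, 4 ≤ n → IsEmpty (cycleGraph n ↪g G)

/-!
Let `S` be a minimal separator with full components `D₁ ≠ D₂` and let `x, y ∈ S` be non-adjacent.
Shortest `x`–`y` paths in `G[D₁ ∪ {x, y}]` and in `G[D₂ ∪ {x, y}]` are chordless, and no edge
joins `D₁` to `D₂`, so together they form an induced cycle of length at least 4.

Conversely, let `a v₁ b v₃ ⋯` be an induced cycle of length at least 4 and `D` the component of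
`b` in `G - N(a)`. Then `S = N(D) ⊆ N(a)` is a minimal separator, with full components `D` and the
component of `a` in `G - S`. It contains `v₁`, and the arc `b v₃ ⋯ a` must meet it in some `vⱼ`
with `j ≥ 3`, which is not adjacent to `v₁`; so `S` is not a clique.
-/

namespace SimpleGraph

variable {W : Type*} {G : SimpleGraph V}

lemma cycleGraph_adj_iff_val {n : ℕ} (hn : 2 ≤ n) {i j : Fin n} :
    (cycleGraph n).Adj i j ↔
      i.val + 1 = j.val ∨ j.val + 1 = i.val ∨ (i.val = 0 ∧ j.val + 1 = n) ∨
        (j.val = 0 ∧ i.val + 1 = n) := by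
  rw [cycleGraph_adj']
  have hsub : ∀ a b : Fin n, (a - b).val = if b ≤ a then a.val - b.val else n + a.val - b.val := by
    intro a b
    split_ifs with h
    · exact Fin.coe_sub_iff_le.mpr h
    · exact Fin.coe_sub_iff_lt.mpr (not_le.mp h)
  rw [hsub, hsub]
  have := i.isLt
  have := j.isLt
  split_ifs <;> omega

namespace Walk

variable {u v : V}

-- Index forms of `IsPath ∧ IsChordless` and (for length at least 3) `IsCycle ∧ IsChordless`.
def IsInducedPath (p : G.Walk u v) : Prop :=
  ∀ ⦃i j : ℕ⦄, i < j → j ≤ p.length →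
    (p.getVert i = p.getVert j ∨ G.Adj (p.getVert i) (p.getVert j)) → j = i + 1

def IsInducedCycle (c : G.Walk u u) : Prop :=
  ∀ ⦃i j : ℕ⦄, i < j → j < c.length →
    (c.getVert i = c.getVert j ∨ G.Adj (c.getVert i) (c.getVert j)) →
      j = i + 1 ∨ (i = 0 ∧ j + 1 = c.length)

lemma isInducedPath_of_length_eq_dist {p : G.Walk u v} (hp : p.length = G.dist u v) :
    p.IsInducedPath := by
  intro i j hij hj hclose
  by_contra hne
  have hshort : G.dist u v ≤ i + 1 + (p.length - j) := by
    rcases hclose with heq | hadj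
    · calc G.dist u v ≤ ((p.take i).append ((p.drop j).copy heq.symm rfl)).length := dist_le _
        _ ≤ _ := by simp only [length_append, length_copy, take_length, drop_length]; omega
    · calc G.dist u v ≤ ((p.take i).append ((p.drop j).cons hadj)).length := dist_le _
        _ ≤ _ := by simp only [length_append, length_cons, take_length, drop_length]; omega
  omega

lemma IsInducedPath.isPath {p : G.Walk u v} (hp : p.IsInducedPath) : p.IsPath := by
  refine (IsPath.getVert_injOn_iff p).mp fun i hi j hj hij => ?_
  by_contra hne
  wlog hlt : i < j generalizing i j
  · exact this j hj i hi hij.symm (Ne.symm hne) (by omega)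
  obtain rfl := hp hlt hj (Or.inl hij)
  exact (p.adj_getVert_succ (by simp at hj; omega)).ne hij

lemma IsInducedPath.map {G' : SimpleGraph W} (f : G ↪g G') {p : G.Walk u v}
    (hp : p.IsInducedPath) : (p.map f.toHom).IsInducedPath := by
  intro i j hij hj hclose
  simp only [getVert_map, length_map] at hclose hj
  exact hp hij hj (hclose.imp (fun h => f.injective h) f.map_adj_iff.mp)

lemma IsInducedPath.isInducedCycle_append_reverse {p q : G.Walk u v} (hp : p.IsInducedPath)
    (hq : q.IsInducedPath)
    (hpq : ∀ i, 0 < i → i < p.length → ∀ j, 0 < j → j < q.length →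
      p.getVert i ≠ q.getVert j ∧ ¬ G.Adj (p.getVert i) (q.getVert j)) :
    (p.append q.reverse).IsInducedCycle := by
  set c := p.append q.reverse
  have hlen : c.length = p.length + q.length := by simp [c]
  have hc₁ : ∀ k ≤ p.length, c.getVert k = p.getVert k := fun k hk => by
    simp [c, getVert_append', hk]
  have hc₂ : ∀ k, p.length ≤ k → c.getVert k = q.getVert (c.length - k) := fun k hk => by
    simp only [c, getVert_append, getVert_reverse, if_neg (not_lt.mpr hk), hlen]
    congr 1
    omega
  intro i j hij hjc hclose
  rcases le_or_gt j p.length with hjp | hpj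
  · rw [hc₁ i (by omega), hc₁ j hjp] at hclose
    exact Or.inl (hp hij hjp hclose)
  rcases le_or_gt p.length i with hpi | hip
  · rw [hc₂ i hpi, hc₂ j hpj.le] at hclose
    have := hq (i := c.length - j) (j := c.length - i) (by omega) (by omega)
      (hclose.imp Eq.symm Adj.symm)
    omega
  rw [hc₁ i hip.le, hc₂ j hpj.le] at hclose
  rcases Nat.eq_zero_or_pos i with rfl | hi
  · have hx : q.getVert 0 = p.getVert 0 := by simp
    rw [← hx] at hclose
    have := hq (i := 0) (j := c.length - j) (by omega) (by omega) hclose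
    omega
  · have := hpq i hi hip (c.length - j) (by omega) (by omega)
    tauto

lemma IsInducedCycle.nonempty_embedding {c : G.Walk u u} (hc : c.IsInducedCycle)
    (hn : 2 ≤ c.length) : Nonempty (cycleGraph c.length ↪g G) := by
  have hadj : ∀ i j, i < j → j < c.length →
      (G.Adj (c.getVert i) (c.getVert j) ↔ j = i + 1 ∨ (i = 0 ∧ j + 1 = c.length)) := by
    refine fun i j hij hj => ⟨fun h => hc hij hj (Or.inr h), ?_⟩
    rintro (rfl | ⟨rfl, hj⟩)
    · exact c.adj_getVert_succ (by omega)
    · have := c.adj_getVert_succ (i := j) (by omega)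
      rw [hj, getVert_length] at this
      rw [getVert_zero]
      exact this.symm
  have hinj : Function.Injective fun i : Fin c.length => c.getVert i := by
    intro i j hij
    by_contra hne
    wlog hlt : i.val < j.val generalizing i j
    · exact this hij.symm (Ne.symm hne) (by omega)
    have := (hadj i j hlt j.isLt).mpr (hc hlt j.isLt (Or.inl hij))
    exact this.ne hij
  refine ⟨⟨⟨_, hinj⟩, fun {i j} => ?_⟩⟩
  simp only [Function.Embedding.coeFn_mk]
  rw [cycleGraph_adj_iff_val hn]
  rcases lt_trichotomy i.val j.val with h | h | h
  · rw [hadj i j h j.isLt]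
    omega
  · simp [Fin.ext h]
    omega
  · rw [adj_comm, hadj j i h i.isLt]
    omega

end Walk

lemma Embedding.exists_isInducedCycle {n : ℕ} (hn : 3 ≤ n) (f : cycleGraph n ↪g G) :
    ∃ (u : V) (c : G.Walk u u), c.IsInducedCycle ∧ c.length = n := by
  obtain ⟨m, rfl⟩ : ∃ m, n = m + 3 := ⟨n - 3, by omega⟩
  refine ⟨_, (cycleGraph.cycle m).map f.toHom, fun i j hij hj hclose => ?_, by simp⟩
  simp only [Walk.length_map, cycleGraph.length_cycle] at hj ⊢
  simp only [Walk.getVert_map, cycleGraph.getVert_cycle (show i ≤ m + 3 by omega),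
    cycleGraph.getVert_cycle (show j ≤ m + 3 by omega)] at hclose
  have hclose' := hclose.imp (fun h => f.injective h) f.map_adj_iff.mp
  rw [Fin.ext_iff, cycleGraph_adj_iff_val (by omega)] at hclose'
  simp only [Nat.mod_eq_of_lt (show m + 3 - j < m + 3 by omega)] at hclose'
  rcases Nat.eq_zero_or_pos i with rfl | hi
  · simp only [Nat.sub_zero, Nat.mod_self] at hclose'
    omega
  · simp only [Nat.mod_eq_of_lt (show m + 3 - i < m + 3 by omega)] at hclose'
    omega

end SimpleGraph

lemma isChordal_iff_forall_isInducedCycle {G : SimpleGraph V} :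
    IsChordal G ↔ ∀ (u : V) (c : G.Walk u u), c.IsInducedCycle → c.length < 4 := by
  refine ⟨fun hG u c hc => ?_, fun h n hn => ⟨fun f => ?_⟩⟩
  · by_contra! hn
    obtain ⟨f⟩ := hc.nonempty_embedding (by omega)
    exact (hG _ hn).false f
  · obtain ⟨u, c, hc, hlen⟩ := f.exists_isInducedCycle (by omega)
    have := h u c hc
    omega

section Components

variable {G : SimpleGraph V} {S D D' : Set V}

open SimpleGraph.Walk

lemma IsCompOf.mem_of_walk (hD : IsCompOf G S D) {u w : V} (p : G.Walk u w) (hu : u ∈ D)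
    (hp : ∀ z ∈ p.support, z ∉ S) : w ∈ D := by
  induction p with
  | nil => exact hu
  | cons h p ih =>
    exact ih (hD.2.2.2 _ hu _ h (hp _ (by simp))) fun z hz => hp z (by simp [hz])

lemma IsCompOf.subset_of_mem (hD : IsCompOf G S D) (hD' : IsCompOf G S D') {v : V}
    (hv : v ∈ D) (hv' : v ∈ D') : D ⊆ D' := by
  intro w hw
  obtain ⟨p⟩ := hD.2.2.1.preconnected ⟨v, hv⟩ ⟨w, hw⟩
  have hpS : ∀ z ∈ (p.map (Embedding.induce D).toHom).support, z ∉ S := by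
    simp only [Walk.support_map, List.mem_map]
    rintro _ ⟨z, -, rfl⟩
    exact Set.disjoint_left.mp hD.2.1 z.2
  exact hD'.mem_of_walk _ hv' hpS

lemma IsCompOf.eq_of_mem (hD : IsCompOf G S D) (hD' : IsCompOf G S D') {v : V}
    (hv : v ∈ D) (hv' : v ∈ D') : D = D' :=
  (hD.subset_of_mem hD' hv hv').antisymm (hD'.subset_of_mem hD hv' hv)

lemma IsCompOf.disjoint (hD : IsCompOf G S D) (hD' : IsCompOf G S D') (hne : D ≠ D') :
    Disjoint D D' :=
  Set.disjoint_left.mpr fun _ hv hv' => hne (hD.eq_of_mem hD' hv hv')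

lemma IsCompOf.nbhd_subset (hD : IsCompOf G S D) : nbhd G D ⊆ S := by
  rintro s ⟨hsD, d, hd, hadj⟩
  by_contra hs
  exact hsD (hD.2.2.2 d hd s hadj.symm hs)

lemma isCompOf_nbhd (hne : D.Nonempty) (hconn : (G.induce D).Connected) :
    IsCompOf G (nbhd G D) D :=
  ⟨hne, Set.disjoint_left.mpr fun _ hv hv' => hv'.1 hv, hconn,
    fun v hv _ hadj hw => by_contra fun hwD => hw ⟨hwD, v, hv, hadj.symm⟩⟩

lemma exists_isCompOf_mem {v : V} (hv : v ∉ S) : ∃ D, IsCompOf G S D ∧ v ∈ D := by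
  classical
  set D := {w | ∃ p : G.Walk v w, ∀ z ∈ p.support, z ∉ S}
  have hvD : v ∈ D := ⟨nil, by simpa⟩
  refine ⟨D, ⟨⟨v, hvD⟩, ?_, ?_, ?_⟩, hvD⟩
  · exact Set.disjoint_left.mpr fun w ⟨p, hp⟩ => hp w p.end_mem_support
  · refine induce_connected_of_patches v hvD fun ⟨p, hp⟩ =>
      ⟨{z | z ∈ p.support}, fun z hz => ?_, p.start_mem_support, p.end_mem_support,
        p.connected_induce_support.preconnected _ _⟩
    exact ⟨p.takeUntil z hz, fun y hy => hp y (p.support_takeUntil_subset_support hz hy)⟩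
  · rintro w ⟨p, hp⟩ w' hadj hw'
    refine ⟨p.concat hadj, fun z hz => ?_⟩
    simp only [support_concat, List.mem_append, List.mem_singleton] at hz
    rcases hz with hz | rfl
    exacts [hp z hz, hw']

lemma IsCompOf.exists_isInducedPath (hD : IsCompOf G S D) (hfull : FullTo G S D) {x y : V}
    (hx : x ∈ S) (hy : y ∈ S) (hxy : x ≠ y) (hnadj : ¬ G.Adj x y) :
    ∃ p : G.Walk x y, p.IsInducedPath ∧ 2 ≤ p.length ∧
      ∀ i, 0 < i → i < p.length → p.getVert i ∈ D := by
  set A := insert x (insert y D)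
  have hDA : D ⊆ A := (Set.subset_insert _ _).trans (Set.subset_insert _ _)
  obtain ⟨d, hd, hxd⟩ := hfull x hx
  obtain ⟨d', hd', hyd'⟩ := hfull y hy
  have hxA : x ∈ A := by simp [A]
  have hyA : y ∈ A := by simp [A]
  have hreach : (G.induce A).Reachable ⟨x, hxA⟩ ⟨y, hyA⟩ :=
    (show (G.induce A).Adj ⟨x, hxA⟩ ⟨d, hDA hd⟩ from hxd).reachable.trans
      (((hD.2.2.1.preconnected ⟨d, hd⟩ ⟨d', hd'⟩).map (induceHomOfLE G hDA).toHom).trans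
        (show (G.induce A).Adj ⟨d', hDA hd'⟩ ⟨y, hyA⟩ from hyd'.symm).reachable)
  obtain ⟨p', hp'⟩ := hreach.exists_walk_length_eq_dist
  set p : G.Walk x y := p'.map (Embedding.induce A).toHom
  have hp : p.IsInducedPath := (isInducedPath_of_length_eq_dist hp').map _
  have hlen0 : p.length ≠ 0 := fun h => hxy (eq_of_length_eq_zero h)
  have hlen1 : p.length ≠ 1 := fun h => hnadj <| by
    simpa [← h] using p.adj_getVert_succ (i := 0) (by omega)
  refine ⟨p, hp, by omega, fun i hi hip => ?_⟩
  have hA : p.getVert i ∈ A := by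
    rw [show p.getVert i = (p'.getVert i).val from Walk.getVert_map _ p' i]
    exact (p'.getVert i).2
  rcases hA with hix | hiy | hiD
  · exact absurd ((hp.isPath.getVert_eq_start_iff hip.le).mp hix) hi.ne'
  · exact absurd ((hp.isPath.getVert_eq_end_iff hip.le).mp hiy) hip.ne
  · exact hiD

end Components

section Chordal

variable {G : SimpleGraph V}

open SimpleGraph.Walk

theorem IsChordal.isClique_of_isMinSep (hG : IsChordal G) {S : Set V} (hS : IsMinSep G S) :
    G.IsClique S := by
  obtain ⟨D₁, D₂, hD₁, hD₂, hne, hfull₁, hfull₂⟩ := hS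
  intro x hx y hy hxy
  by_contra hnadj
  obtain ⟨p, hp, hp2, hpD⟩ := hD₁.exists_isInducedPath hfull₁ hx hy hxy hnadj
  obtain ⟨q, hq, hq2, hqD⟩ := hD₂.exists_isInducedPath hfull₂ hx hy hxy hnadj
  have hdisj := hD₁.disjoint hD₂ hne
  have hsep : ∀ i, 0 < i → i < p.length → ∀ j, 0 < j → j < q.length →
      p.getVert i ≠ q.getVert j ∧ ¬ G.Adj (p.getVert i) (q.getVert j) := by
    intro i hi0 hi j hj0 hj
    have hpi := hpD i hi0 hi
    have hqj := hqD j hj0 hj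
    refine ⟨hdisj.ne_of_mem hpi hqj, fun hadj => ?_⟩
    have hqS : q.getVert j ∉ S := Set.disjoint_left.mp hD₂.2.1 hqj
    exact Set.disjoint_left.mp hdisj (hD₁.2.2.2 _ hpi _ hadj hqS) hqj
  have := isChordal_iff_forall_isInducedCycle.mp hG x _
    (hp.isInducedCycle_append_reverse hq hsep)
  simp only [length_append, length_reverse] at this
  omega

lemma exists_isMinSep_separating {a b : V} (hab : a ≠ b) (hnadj : ¬ G.Adj a b) :
    ∃ S D, IsMinSep G S ∧ IsCompOf G S D ∧ b ∈ D ∧ a ∉ D ∧ a ∉ S ∧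
      ∀ v, G.Adj a v → G.Adj v b → v ∈ S := by
  set S₁ := nbhd G {a}
  have ha : IsCompOf G S₁ {a} := isCompOf_nbhd (Set.singleton_nonempty a) (by simp)
  have hbS₁ : b ∉ S₁ := fun ⟨_, d, hd, hbd⟩ => hnadj (hd ▸ hbd).symm
  obtain ⟨D, hD, hbD⟩ := exists_isCompOf_mem hbS₁
  have haD : a ∉ D := fun h => hab (ha.eq_of_mem hD rfl h ▸ hbD).symm
  set S := nbhd G D
  have hS : S ⊆ S₁ := hD.nbhd_subset
  have haS : a ∉ S := fun h => (hS h).1 rfl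
  obtain ⟨D', hD', haD'⟩ := exists_isCompOf_mem (G := G) haS
  have hDS : IsCompOf G S D := isCompOf_nbhd ⟨b, hbD⟩ hD.2.2.1
  have hfull' : FullTo G S D' := fun s hs => by
    obtain ⟨-, d, rfl, hsd⟩ := hS hs
    exact ⟨_, haD', hsd⟩
  have hcommon : ∀ v, G.Adj a v → G.Adj v b → v ∈ S := fun v hav hvb =>
    ⟨fun hv => Set.disjoint_left.mp hD.2.1 hv ⟨hav.ne', a, rfl, hav.symm⟩, b, hbD, hvb⟩
  exact ⟨S, D, ⟨D', D, hD', hDS, fun h => haD (h ▸ haD'), hfull', fun _ hs => hs.2⟩,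
    hDS, hbD, haD, haS, hcommon⟩

theorem isChordal_of_forall_isMinSep_isClique (hG : ∀ S, IsMinSep G S → G.IsClique S) :
    IsChordal G := by
  refine isChordal_iff_forall_isInducedCycle.mpr fun a c hc => ?_
  by_contra! hn
  have hab : ¬ (a = c.getVert 2 ∨ G.Adj a (c.getVert 2)) := fun h => by
    have := hc (i := 0) (j := 2) (by omega) (by omega) (by simpa using h)
    omega
  obtain ⟨S, D, hS, hD, hbD, haD, haS, hcommon⟩ :=
    exists_isMinSep_separating (fun h => hab (Or.inl h)) (fun h => hab (Or.inr h))
  have h1S : c.getVert 1 ∈ S := hcommon _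
    (by simpa using c.adj_getVert_succ (i := 0) (by omega)) (c.adj_getVert_succ (by omega))
  have hwalk : ∀ z ∈ (c.drop 2).support, z ∉ S := by
    intro z hz hzS
    obtain ⟨k, rfl, hk⟩ := mem_support_iff_exists_getVert.mp hz
    rw [drop_getVert] at hzS
    rw [drop_length] at hk
    rcases Nat.eq_zero_or_pos k with rfl | hk0
    · exact Set.disjoint_left.mp hD.2.1 hbD hzS
    rcases eq_or_lt_of_le hk with hkn | hkn
    · rw [show 2 + k = c.length by omega, getVert_length] at hzS
      exact haS hzS
    have := hc (i := 1) (j := 2 + k) (by omega) (by omega) <| by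
      by_cases heq : c.getVert 1 = c.getVert (2 + k)
      exacts [Or.inl heq, Or.inr (hG S hS h1S hzS heq)]
    omega
  exact haD (hD.mem_of_walk (c.drop 2) hbD hwalk)

end Chordal

theorem statement_2_general (G : SimpleGraph V) :
    IsChordal G ↔ ∀ S : Set V, IsMinSep G S → G.IsClique S :=
  ⟨fun hG _ hS => hG.isClique_of_isMinSep hS, isChordal_of_forall_isMinSep_isClique⟩

/-- A finite graph is chordal iff every minimal separator is a clique. -/
theorem statement_2 [Fintype V] (G : SimpleGraph V) :
    IsChordal G ↔ ∀ S : Set V, IsMinSep G S → G.IsClique S :=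
  statement_2_general G
end

section
/- Let G be a chordal graph, S a minimal separator in G, and D a component of G − S that is full to S. Then there exists a maximal clique Ω of G with S ⊊ Ω ⊆ N[D]. -/
open SimpleGraph

variable {V : Type*}

/-- `Ω` is a maximal clique of `G`. -/
def MaxClique (G : SimpleGraph V) (Ω : Set V) : Prop :=
  G.IsClique Ω ∧ ∀ T : Set V, G.IsClique T → Ω ⊆ T → T = Ω

/-!
In a chordal graph a shortest walk between two vertex sets is an induced path, and a vertex
outside an induced path that is adjacent to both of its ends is adjacent to all of it (otherwise
a subpath and that vertex form an induced cycle of length at least four). Hence a minimal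
separator `S` is a clique: non-adjacent `s, t ∈ S` would close such a cycle with a shortest walk
from the neighbours of `s` in one full component, through `t`, to those in another. Likewise a
finite clique whose vertices all have neighbours in a connected set `D` has a common neighbour in
`D`, by induction on the clique. For a common neighbour `c ∈ D` of `S`, every maximal clique
containing `S ∪ {c}` lies in `N[c] ⊆ N[D]`.
-/

open Relation

/-- Walks and paths are sequences `p : ℕ → V` of which only `p 0, …, p m` matter. -/
def IsWalkIn (G : SimpleGraph V) (C A B : Set V) (p : ℕ → V) (m : ℕ) : Prop :=
  (∀ i < m, G.Adj (p i) (p (i + 1))) ∧ (∀ i ≤ m, p i ∈ C) ∧ p 0 ∈ A ∧ p m ∈ B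

def IsInducedPath (G : SimpleGraph V) (p : ℕ → V) (m : ℕ) : Prop :=
  ∀ i j, i < j → j ≤ m → p i ≠ p j ∧ (G.Adj (p i) (p j) ↔ j = i + 1)

namespace IsInducedPath

variable {G : SimpleGraph V} {p : ℕ → V} {m : ℕ}

lemma mono (hp : IsInducedPath G p m) {j : ℕ} (hj : j ≤ m) : IsInducedPath G p j :=
  fun a b hab hb => hp a b hab (hb.trans hj)

lemma drop (hp : IsInducedPath G p m) (j : ℕ) : IsInducedPath G (fun k => p (k + j)) (m - j) :=
  fun a b hab hb => by
    have := hp (a + j) (b + j) (by omega) (by omega)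
    exact ⟨this.1, this.2.trans (by omega)⟩

end IsInducedPath

def AdjIn (G : SimpleGraph V) (C : Set V) (a b : V) : Prop :=
  G.Adj a b ∧ a ∈ C ∧ b ∈ C

section AdjIn

variable {G : SimpleGraph V} {C A B : Set V} {a b : V}

lemma reflTransGen_adjIn_of_connected (hC : (G.induce C).Connected) (ha : a ∈ C) (hb : b ∈ C) :
    ReflTransGen (AdjIn G C) a b := by
  have h := (reachable_iff_reflTransGen _ _).mp (hC.preconnected ⟨a, ha⟩ ⟨b, hb⟩)
  exact h.lift Subtype.val fun x y hxy => ⟨hxy, x.2, y.2⟩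

lemma reflTransGen_adjIn_mono {C' : Set V} (hCC' : C ⊆ C') (h : ReflTransGen (AdjIn G C) a b) :
    ReflTransGen (AdjIn G C') a b :=
  ReflTransGen.mono (fun _ _ hxy => ⟨hxy.1, hCC' hxy.2.1, hCC' hxy.2.2⟩) _ _ h

lemma exists_isWalkIn_of_reflTransGen (h : ReflTransGen (AdjIn G C) a b) (haC : a ∈ C)
    (haA : a ∈ A) (hbB : b ∈ B) : ∃ p m, IsWalkIn G C A B p m := by
  induction h generalizing B with
  | refl => exact ⟨fun _ => a, 0, by simp [IsWalkIn, haC, haA, hbB]⟩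
  | @tail b c _ hbc ih =>
    obtain ⟨p, m, hstep, hC, hA, hB⟩ := ih (B := {b}) rfl
    refine ⟨fun i => if i ≤ m then p i else c, m + 1, fun i hi => ?_, fun i hi => ?_, ?_, ?_⟩
    · rcases (Nat.lt_succ_iff.mp hi).lt_or_eq with hi | rfl
      · simpa [hi.le, show i + 1 ≤ m by omega] using hstep i hi
      · simpa [show p i = b from hB] using hbc.1
    · dsimp only
      split_ifs with him
      · exact hC i him
      · exact hbc.2.2
    · simpa using hA
    · simpa using hbB

end AdjIn

namespace IsWalkIn

variable {G : SimpleGraph V} {C A B : Set V} {p : ℕ → V} {m i : ℕ}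

lemma take (hp : IsWalkIn G C A B p m) (hi : i ≤ m) (hB : p i ∈ B) : IsWalkIn G C A B p i :=
  ⟨fun j hj => hp.1 j (by omega), fun j hj => hp.2.1 j (by omega), hp.2.2.1, hB⟩

lemma drop (hp : IsWalkIn G C A B p m) (hi : i ≤ m) (hA : p i ∈ A) :
    IsWalkIn G C A B (fun k => p (k + i)) (m - i) := by
  refine ⟨fun j hj => ?_, fun j hj => hp.2.1 _ (by omega), by simpa using hA, ?_⟩
  · simpa only [Nat.add_right_comm j 1 i] using hp.1 (j + i) (by omega)
  · simpa only [Nat.sub_add_cancel hi] using hp.2.2.2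

lemma shortcut (hp : IsWalkIn G C A B p m) {s : ℕ} (hs : i + s < m)
    (hadj : G.Adj (p i) (p (i + s + 1))) :
    IsWalkIn G C A B (fun k => if k ≤ i then p k else p (k + s)) (m - s) := by
  refine ⟨fun j hj => ?_, fun j hj => ?_, by simpa using hp.2.2.1, ?_⟩
  · rcases lt_trichotomy j i with h | rfl | h
    · simpa [h.le, show j + 1 ≤ i by omega] using hp.1 j (by omega)
    · simpa [Nat.add_right_comm j 1 s] using hadj
    · simpa [show ¬ j ≤ i by omega, show ¬ j + 1 ≤ i by omega, Nat.add_right_comm j 1 s]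
        using hp.1 (j + s) (by omega)
  · dsimp only
    split_ifs
    · exact hp.2.1 j (by omega)
    · exact hp.2.1 (j + s) (by omega)
  · simpa [show ¬ m - s ≤ i by omega, Nat.sub_add_cancel (show s ≤ m by omega)]
      using hp.2.2.2

theorem exists_isInducedPath (hp : IsWalkIn G C A B p m) :
    ∃ q r, IsWalkIn G C A B q r ∧ IsInducedPath G q r ∧
      (∀ i, 0 < i → i ≤ r → q i ∉ A) ∧ (∀ i < r, q i ∉ B) := by
  classical
  have hex : ∃ r, ∃ q, IsWalkIn G C A B q r := ⟨m, p, hp⟩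
  obtain ⟨q, hq⟩ := Nat.find_spec hex
  set r := Nat.find hex
  have hmin : ∀ q' r', IsWalkIn G C A B q' r' → r ≤ r' := fun q' r' h => Nat.find_min' hex ⟨q', h⟩
  have hB : ∀ i < r, q i ∉ B := fun i hi hB => absurd (hmin _ _ (hq.take hi.le hB)) (by omega)
  have hA : ∀ i, 0 < i → i ≤ r → q i ∉ A := fun i hi hir hA =>
    absurd (hmin _ _ (hq.drop hir hA)) (by omega)
  have hchord : ∀ i j, i + 1 < j → j ≤ r → ¬ G.Adj (q i) (q j) := fun i j hij hj hadj => by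
    have := hmin _ (r - (j - i - 1)) (hq.shortcut (i := i) (s := j - i - 1) (by omega)
      (by rwa [show i + (j - i - 1) + 1 = j by omega]))
    omega
  refine ⟨q, r, hq, fun i j hij hj => ⟨fun heq => ?_, ?_⟩, hA, hB⟩
  · rcases hj.lt_or_eq with hj | rfl
    · have := hmin _ (r - (j - i)) (hq.shortcut (i := i) (s := j - i) (by omega)
        (by rw [heq, show i + (j - i) + 1 = j + 1 by omega]; exact hq.1 j hj))
      omega
    · exact hB i hij (heq ▸ hq.2.2.2)
  · refine ⟨fun hadj => by_contra fun hne => hchord i j (by omega) hj hadj, ?_⟩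
    rintro rfl
    exact hq.1 i (by omega)

end IsWalkIn

lemma cycleGraph_adj_of_lt {n : ℕ} {a b : Fin (n + 2)} (h : a < b) :
    (cycleGraph (n + 2)).Adj a b ↔ b.val = a.val + 1 ∨ (a.val = 0 ∧ b.val = n + 1) := by
  have hab : a.val < b.val := h
  have hb := b.isLt
  rw [cycleGraph_adj', Fin.sub_val_of_le h.le, Fin.coe_sub_iff_lt.mpr h]
  omega

/-- `p 0, …, p m, v` is an induced cycle of length `m + 2 ≥ 4`. -/
lemma IsChordal.false_of_isInducedPath {G : SimpleGraph V} (hG : IsChordal G) {p : ℕ → V}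
    {m : ℕ} {v : V} (hp : IsInducedPath G p m) (hm : 2 ≤ m) (hv : ∀ i ≤ m, p i ≠ v)
    (h₀ : G.Adj (p 0) v) (hₘ : G.Adj (p m) v) (hmid : ∀ i, 0 < i → i < m → ¬ G.Adj (p i) v) :
    False := by
  let f : Fin (m + 2) → V := fun i => if i.val ≤ m then p i else v
  have hf : ∀ a b : Fin (m + 2), a < b → (G.Adj (f a) (f b) ↔ (cycleGraph (m + 2)).Adj a b) ∧
      f a ≠ f b := by
    intro a b hab
    have hab' : a.val < b.val := hab
    have hb := b.isLt
    rw [cycleGraph_adj_of_lt hab]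
    by_cases hbm : b.val ≤ m
    · simp only [f, hbm, hab'.le.trans hbm, if_true]
      have := hp a b hab' hbm
      exact ⟨this.2.trans (by omega), this.1⟩
    · have ham : a.val ≤ m := by omega
      simp only [f, hbm, ham, if_true, if_false]
      refine ⟨⟨fun hadj => ?_, ?_⟩, hv a ham⟩
      · by_contra hne
        exact hmid a (by omega) (by omega) hadj
      · rintro (h | ⟨h, -⟩)
        · rwa [show a.val = m by omega]
        · rwa [h]
  refine (hG (m + 2) (by omega)).false ⟨⟨f, fun a b hab => ?_⟩, fun {a b} => ?_⟩
  · by_contra hne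
    rcases lt_or_gt_of_ne hne with h | h
    · exact (hf a b h).2 hab
    · exact (hf b a h).2 hab.symm
  · rcases lt_trichotomy a b with h | rfl | h
    · exact (hf a b h).1
    · simp
    · rw [G.adj_comm, (cycleGraph _).adj_comm]
      exact (hf b a h).1

theorem IsChordal.adj_of_isInducedPath {G : SimpleGraph V} (hG : IsChordal G) {p : ℕ → V}
    {m : ℕ} {v : V} (hp : IsInducedPath G p m) (hv : ∀ i ≤ m, p i ≠ v) (h₀ : G.Adj (p 0) v)
    (hₘ : G.Adj (p m) v) : ∀ i ≤ m, G.Adj (p i) v := by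
  induction m using Nat.strong_induction_on generalizing p with
  | _ m ih =>
  by_cases hmid : ∃ j, 0 < j ∧ j < m ∧ G.Adj (p j) v
  · obtain ⟨j, hj₀, hjm, hj⟩ := hmid
    intro i hi
    rcases le_total i j with hij | hji
    · exact ih j hjm (hp.mono hjm.le) (fun i hi => hv i (by omega)) h₀ hj i hij
    · have := ih (m - j) (by omega) (hp.drop j) (fun i hi => hv _ (by omega)) (by simpa using hj)
        (by simpa [Nat.sub_add_cancel hjm.le] using hₘ) (i - j) (by omega)
      simpa [Nat.sub_add_cancel hji] using this
  · push Not at hmid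
    intro i hi
    by_contra hiv
    have hi₀ : i ≠ 0 := by rintro rfl; exact hiv h₀
    have him : i ≠ m := by rintro rfl; exact hiv hₘ
    exact hG.false_of_isInducedPath hp (by omega) hv h₀ hₘ hmid

namespace IsCompOf

variable {G : SimpleGraph V} {S D₁ D₂ : Set V}

lemma subset_of_mem_s4 (h₁ : IsCompOf G S D₁) (h₂ : IsCompOf G S D₂) {v : V} (hv₁ : v ∈ D₁)
    (hv₂ : v ∈ D₂) : D₁ ⊆ D₂ := by
  intro w hw
  induction reflTransGen_adjIn_of_connected h₁.2.2.1 hv₁ hw with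
  | refl => exact hv₂
  | tail _ hxy ih => exact h₂.2.2.2 _ (ih hxy.2.1) _ hxy.1 (Set.disjoint_left.mp h₁.2.1 hxy.2.2)

lemma eq_of_mem_s4 (h₁ : IsCompOf G S D₁) (h₂ : IsCompOf G S D₂) {v : V} (hv₁ : v ∈ D₁)
    (hv₂ : v ∈ D₂) : D₁ = D₂ :=
  (h₁.subset_of_mem_s4 h₂ hv₁ hv₂).antisymm (h₂.subset_of_mem_s4 h₁ hv₂ hv₁)

lemma not_adj (h₁ : IsCompOf G S D₁) (h₂ : IsCompOf G S D₂) (hne : D₁ ≠ D₂) {v w : V}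
    (hv : v ∈ D₁) (hw : w ∈ D₂) : ¬ G.Adj v w := fun hadj =>
  hne (h₁.eq_of_mem_s4 h₂ (h₁.2.2.2 v hv w hadj (Set.disjoint_left.mp h₂.2.1 hw)) hw)

end IsCompOf

theorem IsMinSep.isClique {G : SimpleGraph V} (hG : IsChordal G) {S : Set V}
    (hS : IsMinSep G S) : G.IsClique S := by
  obtain ⟨D₁, D₂, h₁, h₂, hne, hf₁, hf₂⟩ := hS
  intro s hs t ht hst
  by_contra hnadj
  have hsD : ∀ {D}, IsCompOf G S D → s ∉ D := fun hD h => Set.disjoint_left.mp hD.2.1 h hs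
  set C := insert t (D₁ ∪ D₂)
  obtain ⟨a, ha, hsa⟩ := hf₁ s hs
  obtain ⟨b, hb, hsb⟩ := hf₂ s hs
  obtain ⟨d₁, hd₁, htd₁⟩ := hf₁ t ht
  obtain ⟨d₂, hd₂, htd₂⟩ := hf₂ t ht
  have hD₁C : D₁ ⊆ C := fun x hx => Or.inr (Or.inl hx)
  have hD₂C : D₂ ⊆ C := fun x hx => Or.inr (Or.inr hx)
  have hreach : ReflTransGen (AdjIn G C) a b :=
    ((reflTransGen_adjIn_mono hD₁C (reflTransGen_adjIn_of_connected h₁.2.2.1 ha hd₁)).tail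
      ⟨htd₁.symm, hD₁C hd₁, Or.inl rfl⟩).trans
    ((reflTransGen_adjIn_mono hD₂C (reflTransGen_adjIn_of_connected h₂.2.2.1 hd₂ hb)).head
      ⟨htd₂, Or.inl rfl, hD₂C hd₂⟩)
  obtain ⟨p, m, hp⟩ := exists_isWalkIn_of_reflTransGen hreach (hD₁C ha)
    (A := {x | x ∈ D₁ ∧ G.Adj x s}) (B := {x | x ∈ D₂ ∧ G.Adj x s}) ⟨ha, hsa.symm⟩ ⟨hb, hsb.symm⟩
  obtain ⟨q, r, hq, hqi, hqA, hqB⟩ := hp.exists_isInducedPath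
  have hr : 2 ≤ r := by
    by_contra! hr
    interval_cases r
    · exact hne (h₁.eq_of_mem_s4 h₂ hq.2.2.1.1 hq.2.2.2.1)
    · exact h₁.not_adj h₂ hne hq.2.2.1.1 hq.2.2.2.1 ((hqi 0 1 one_pos le_rfl).2.mpr rfl)
  refine hG.false_of_isInducedPath hqi hr (fun i hi heq => ?_) hq.2.2.1.2 hq.2.2.2.2
    (fun i hi hir hadj => ?_)
  · rcases hq.2.1 i hi with h | h | h
    · exact hst (heq ▸ h)
    · exact hsD h₁ (heq ▸ h)
    · exact hsD h₂ (heq ▸ h)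
  · rcases hq.2.1 i hir.le with h | h | h
    · exact hnadj (h ▸ hadj).symm
    · exact hqA i hi hir.le ⟨h, hadj⟩
    · exact hqB i hir ⟨h, hadj⟩

theorem IsChordal.exists_adj_forall_of_isClique {G : SimpleGraph V} (hG : IsChordal G)
    {D K : Set V} (hD : (G.induce D).Connected) (hK : G.IsClique K) (hKfin : K.Finite)
    (hKD : Disjoint K D) (hfull : FullTo G K D) : ∃ d ∈ D, ∀ k ∈ K, G.Adj k d := by
  induction K, hKfin using Set.Finite.induction_on with
  | empty =>
    obtain ⟨⟨d, hd⟩⟩ := hD.nonempty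
    exact ⟨d, hd, by simp⟩
  | @insert k K hk _ ih =>
    obtain ⟨d₀, hd₀, hd₀K⟩ := ih (hK.subset (Set.subset_insert _ _))
      (hKD.mono_left (Set.subset_insert _ _)) (fun x hx => hfull x (Or.inr hx))
    have hkD : k ∉ D := Set.disjoint_left.mp hKD (Set.mem_insert _ _)
    obtain ⟨dₖ, hdₖ, hkdₖ⟩ := hfull k (Set.mem_insert _ _)
    have hreach : ReflTransGen (AdjIn G (insert k D)) d₀ k :=
      (reflTransGen_adjIn_mono (Set.subset_insert _ _)
        (reflTransGen_adjIn_of_connected hD hd₀ hdₖ)).tail ⟨hkdₖ.symm, Or.inr hdₖ, Or.inl rfl⟩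
    obtain ⟨p, m, hp⟩ := exists_isWalkIn_of_reflTransGen hreach (Or.inr hd₀)
      (A := {x | x ∈ D ∧ ∀ k' ∈ K, G.Adj k' x}) (B := {k}) ⟨hd₀, hd₀K⟩ rfl
    obtain ⟨q, r, hq, hqi, hqA, hqB⟩ := hp.exists_isInducedPath
    obtain ⟨hq₀D, hq₀K⟩ := hq.2.2.1
    have hqr : q r = k := hq.2.2.2
    have hqD : ∀ i < r, q i ∈ D := fun i hi => (hq.2.1 i hi.le).resolve_left (hqB i hi)
    have hr : 1 ≤ r := Nat.one_le_iff_ne_zero.mpr fun h => hkD (hqr ▸ h ▸ hq₀D)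
    rcases hr.eq_or_lt with rfl | hr
    · refine ⟨q 0, hq₀D, fun k' hk' => hk'.elim (fun h => ?_) (hq₀K k')⟩
      rw [h, ← hqr]
      exact ((hqi 0 1 one_pos le_rfl).2.mpr rfl).symm
    -- the vertex `q (r - 1) ∈ D` misses some `k' ∈ K`, which sees both ends of the path `q`
    obtain ⟨k', hk'K, hk'⟩ : ∃ k' ∈ K, ¬ G.Adj k' (q (r - 1)) := by
      by_contra! h
      exact hqA (r - 1) (by omega) (by omega) ⟨hqD _ (by omega), h⟩
    have hk'k : k' ≠ k := fun h => hk (h ▸ hk'K)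
    have hk'q : ∀ i ≤ r, q i ≠ k' := fun i hi heq => by
      rcases hi.lt_or_eq with hi | rfl
      · exact Set.disjoint_left.mp hKD (Or.inr hk'K) (heq ▸ hqD i hi)
      · exact hk'k (heq ▸ hqr)
    refine absurd (hG.adj_of_isInducedPath hqi hk'q (hq₀K k' hk'K).symm ?_ (r - 1) (by omega)).symm
      hk'
    rw [hqr]
    exact hK (Or.inl rfl) (Or.inr hk'K) hk'k.symm

lemma maxClique_iff_maximal {G : SimpleGraph V} {Ω : Set V} :
    MaxClique G Ω ↔ Maximal G.IsClique Ω :=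
  and_congr_right fun _ =>
    ⟨fun h _ hT hΩT => (h _ hT hΩT).le, fun h _ hT hΩT => (h hT hΩT).antisymm hΩT⟩

/-- In a chordal graph, for any minimal separator `S` and any component `D` of `G - S`
full to `S`, there is a maximal clique `Ω` with `S ⊊ Ω ⊆ N[D]`. -/
theorem statement_4 [Fintype V] (G : SimpleGraph V) (hG : IsChordal G)
    (S D : Set V) (hS : IsMinSep G S) (hD : IsCompOf G S D) (hfull : FullTo G S D) :
    ∃ Ω : Set V, MaxClique G Ω ∧ S ⊂ Ω ∧ Ω ⊆ closedNbhd G D := by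
  obtain ⟨-, hDS, hDconn, -⟩ := hD
  have hSc := hS.isClique hG
  obtain ⟨c, hcD, hcS⟩ :=
    hG.exists_adj_forall_of_isClique hDconn hSc S.toFinite hDS.symm hfull
  have hcS' : c ∉ S := Set.disjoint_left.mp hDS hcD
  obtain ⟨Ω, hcSΩ, hΩ⟩ :=
    Finite.exists_le_maximal (hSc.insert fun s hs _ => (hcS s hs).symm)
  refine ⟨Ω, maxClique_iff_maximal.mpr hΩ,
    ((Set.subset_insert _ _).trans hcSΩ).ssubset_of_mem_notMem (hcSΩ (Set.mem_insert _ _)) hcS',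
    fun v hv => ?_⟩
  by_cases hvc : v = c
  · exact Or.inl (hvc ▸ hcD)
  by_cases hvD : v ∈ D
  · exact Or.inl hvD
  · exact Or.inr ⟨hvD, c, hcD, hΩ.prop hv (hcSΩ (Set.mem_insert _ _)) hvc⟩
end

section
/- Let G be a chordal graph, S a minimal separator in G, and D a component of G − S full to S. If there exist two distinct maximal cliques Ω₁, Ω₂ of G with S ⊊ Ωᵢ ⊆ N[D] for i = 1, 2, then there exists a minimal separator S' in G with S ⊊ S' ⊆ N[D]. -/
open SimpleGraph

variable {V : Type*}

/-!
Choose nonadjacent `a ∈ Ω₁ \ Ω₂` and `b ∈ Ω₂ \ Ω₁` (they exist by maximality of the cliques);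
both lie in `D`. Let `C` be the component of `G - N(a)` containing `b`. Then `N(C) ⊆ N(a)`, and
`N(C)` is a minimal separator with full components `C` and the component of `a`. Every vertex
of `S` is adjacent to both `a` and `b`, so `S ⊆ N(C)`; and the connected set `D` contains
`b ∈ C` and `a ∉ C`, so it meets `N(C)` outside `S`. Finally `N(C) ⊆ N(a) ⊆ N[D]`.
-/

section

variable {G : SimpleGraph V} {T C D : Set V} {a b : V}

/-- The component of `G - T` containing `a`; it is empty when `a ∈ T`. -/
def compOf (G : SimpleGraph V) (T : Set V) (a : V) : Set V :=
  {v | ∃ p : G.Walk a v, ∀ x ∈ p.support, x ∉ T}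

lemma mem_compOf_self (ha : a ∉ T) : a ∈ compOf G T a :=
  ⟨Walk.nil, by simpa using ha⟩

lemma notMem_of_mem_compOf {v : V} (hv : v ∈ compOf G T a) : v ∉ T := by
  obtain ⟨p, hp⟩ := hv
  exact hp v p.end_mem_support

lemma isCompOf_compOf (ha : a ∉ T) : IsCompOf G T (compOf G T a) := by
  classical
  refine ⟨⟨a, mem_compOf_self ha⟩, Set.disjoint_left.mpr fun _ ↦ notMem_of_mem_compOf, ?_, ?_⟩
  · refine induce_connected_of_patches a (mem_compOf_self ha) fun ⟨p, hp⟩ ↦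
      ⟨{x | x ∈ p.support}, fun x hx ↦ ?_, p.start_mem_support, p.end_mem_support,
        (p.connected_induce_support).preconnected _ _⟩
    exact ⟨p.takeUntil x hx, fun y hy ↦ hp y (p.support_takeUntil_subset_support hx hy)⟩
  · rintro v ⟨p, hp⟩ w hvw hw
    refine ⟨p.concat hvw, fun x hx ↦ ?_⟩
    rw [Walk.support_concat, List.mem_append, List.mem_singleton] at hx
    exact hx.elim (hp x) (· ▸ hw)

lemma notMem_compOf_neighborSet (hab : a ≠ b) : a ∉ compOf G (G.neighborSet a) b := by
  rintro ⟨p, hp⟩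
  have hnil : ¬ p.Nil := Walk.not_nil_of_ne hab.symm
  exact hp _ (p.getVert_mem_support _) (p.adj_penultimate hnil).symm

lemma IsCompOf.nbhd_subset_s5 (hC : IsCompOf G T C) : nbhd G C ⊆ T := by
  rintro v ⟨hvC, c, hc, hvc⟩
  by_contra hvT
  exact hvC (hC.2.2.2 c hc v hvc.symm hvT)

lemma IsCompOf.mem_of_mem_closedNbhd {v : V} (hD : IsCompOf G T D) (hv : v ∈ closedNbhd G D)
    (hvT : v ∉ T) : v ∈ D :=
  hv.elim id fun hvN ↦ absurd (hD.nbhd_subset_s5 hvN) hvT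

lemma neighborSet_subset_closedNbhd (ha : a ∈ D) : G.neighborSet a ⊆ closedNbhd G D :=
  fun _ hav ↦ or_iff_not_imp_left.mpr fun hvD ↦ ⟨hvD, a, ha, hav.symm⟩

lemma isCompOf_nbhd_s5 (hC : (G.induce C).Connected) : IsCompOf G (nbhd G C) C := by
  obtain ⟨c⟩ := hC.nonempty
  refine ⟨⟨c, c.2⟩, Set.disjoint_left.mpr fun v hv hvN ↦ hvN.1 hv, hC, ?_⟩
  intro v hv w hvw hwN
  by_contra hwC
  exact hwN ⟨hwC, v, hv, hvw.symm⟩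

lemma isMinSep_nbhd (hC : (G.induce C).Connected) (haC : a ∉ C)
    (hCa : nbhd G C ⊆ G.neighborSet a) : IsMinSep G (nbhd G C) := by
  have ha : a ∉ nbhd G C := fun h ↦ (hCa h).ne rfl
  refine ⟨compOf G (nbhd G C) a, C, isCompOf_compOf ha, isCompOf_nbhd_s5 hC,
    fun h ↦ haC (h ▸ mem_compOf_self ha), fun s hs ↦ ⟨a, mem_compOf_self ha, (hCa hs).symm⟩,
    fun s ⟨_, c, hc, hsc⟩ ↦ ⟨c, hc, hsc⟩⟩

lemma inter_nbhd_nonempty_of_induce_connected (hD : (G.induce D).Connected)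
    (hb : b ∈ D ∩ C) (ha : a ∈ D \ C) : (D ∩ nbhd G C).Nonempty := by
  obtain ⟨p⟩ := hD.preconnected ⟨b, hb.1⟩ ⟨a, ha.1⟩
  obtain ⟨d, -, hd₁, hd₂⟩ := p.exists_boundary_dart {x | x.1 ∈ C} hb.2 ha.2
  exact ⟨d.snd, d.snd.2, hd₂, d.fst, hd₁, by simpa using d.adj.symm⟩

lemma MaxClique.exists_nonadj {Ω₁ Ω₂ : Set V} (hΩ₁ : MaxClique G Ω₁) (hΩ₂ : MaxClique G Ω₂)
    (hne : Ω₁ ≠ Ω₂) : ∃ a ∈ Ω₁ \ Ω₂, ∃ b ∈ Ω₂ \ Ω₁, ¬ G.Adj a b := by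
  by_contra! hcon
  have hcl : G.IsClique (Ω₁ ∪ Ω₂) :=
    Set.pairwise_union.mpr ⟨hΩ₁.1, hΩ₂.1, fun x hx y hy hxy ↦ by
      have hadj : G.Adj x y := by
        by_cases hx₂ : x ∈ Ω₂
        · exact hΩ₂.1 hx₂ hy hxy
        by_cases hy₁ : y ∈ Ω₁
        · exact hΩ₁.1 hx hy₁ hxy
        exact hcon x ⟨hx, hx₂⟩ y ⟨hy, hy₁⟩
      exact ⟨hadj, hadj.symm⟩⟩
  exact hne (hΩ₂.2 Ω₁ hΩ₁.1 ((hΩ₁.2 _ hcl Set.subset_union_left) ▸ Set.subset_union_right))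

end

theorem statement_5_general (G : SimpleGraph V)
    (S D : Set V) (hD : IsCompOf G S D)
    (Ω₁ Ω₂ : Set V) (hΩ₁ : MaxClique G Ω₁) (hΩ₂ : MaxClique G Ω₂) (hne : Ω₁ ≠ Ω₂)
    (hS₁ : S ⊂ Ω₁) (hS₂ : S ⊂ Ω₂)
    (hN₁ : Ω₁ ⊆ closedNbhd G D) (hN₂ : Ω₂ ⊆ closedNbhd G D) :
    ∃ S' : Set V, IsMinSep G S' ∧ S ⊂ S' ∧ S' ⊆ closedNbhd G D := by
  obtain ⟨a, ⟨ha₁, ha₂⟩, b, ⟨hb₂, hb₁⟩, hab⟩ := hΩ₁.exists_nonadj hΩ₂ hne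
  have haD : a ∈ D := hD.mem_of_mem_closedNbhd (hN₁ ha₁) fun h ↦ ha₂ (hS₂.1 h)
  have hbD : b ∈ D := hD.mem_of_mem_closedNbhd (hN₂ hb₂) fun h ↦ hb₁ (hS₁.1 h)
  have hSa : S ⊆ G.neighborSet a := fun s hs ↦
    hΩ₁.1 ha₁ (hS₁.1 hs) fun h ↦ ha₂ (h ▸ hS₂.1 hs)
  set C := compOf G (G.neighborSet a) b
  have hC : IsCompOf G (G.neighborSet a) C := isCompOf_compOf hab
  have haC : a ∉ C := notMem_compOf_neighborSet fun h ↦ ha₂ (h ▸ hb₂)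
  have hSC : S ⊆ nbhd G C := fun s hs ↦
    ⟨fun h ↦ notMem_of_mem_compOf h (hSa hs), b, mem_compOf_self hab,
      hΩ₂.1 (hS₂.1 hs) hb₂ fun h ↦ hb₁ (h ▸ hS₁.1 hs)⟩
  obtain ⟨v, hvD, hvC⟩ :=
    inter_nbhd_nonempty_of_induce_connected hD.2.2.1 ⟨hbD, mem_compOf_self hab⟩ ⟨haD, haC⟩
  refine ⟨nbhd G C, isMinSep_nbhd hC.2.2.1 haC hC.nbhd_subset_s5,
    hSC.ssubset_of_not_subset fun h ↦ Set.disjoint_left.mp hD.2.1 hvD (h hvC),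
    hC.nbhd_subset_s5.trans (neighborSet_subset_closedNbhd haD)⟩

/-- In a chordal graph, if a full component `D` of a minimal separator `S` houses two
distinct maximal cliques `Ω` with `S ⊊ Ω ⊆ N[D]`, then there is a minimal separator `S'`
with `S ⊊ S' ⊆ N[D]`. -/
theorem statement_5 [Fintype V] (G : SimpleGraph V) (hG : IsChordal G)
    (S D : Set V) (hS : IsMinSep G S) (hD : IsCompOf G S D) (hfull : FullTo G S D)
    (Ω₁ Ω₂ : Set V) (hΩ₁ : MaxClique G Ω₁) (hΩ₂ : MaxClique G Ω₂) (hne : Ω₁ ≠ Ω₂)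
    (hS₁ : S ⊂ Ω₁) (hS₂ : S ⊂ Ω₂)
    (hN₁ : Ω₁ ⊆ closedNbhd G D) (hN₂ : Ω₂ ⊆ closedNbhd G D) :
    ∃ S' : Set V, IsMinSep G S' ∧ S ⊂ S' ∧ S' ⊆ closedNbhd G D :=
  statement_5_general G S D hD Ω₁ Ω₂ hΩ₁ hΩ₂ hne hS₁ hS₂ hN₁ hN₂
end

section
/- Let G be a graph, w a vertex of G, and G' = G − w. If Ω' is a potential maximal clique in G', then exactly one of the two sets Ω' and Ω' ∪ {w} is a potential maximal clique in G. -/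
open SimpleGraph

variable {V : Type*}

/-- `D` is a connected component of `G[W] - Ω` (the graph induced on the ground set `W`,
with `Ω` removed). -/
def IsCompIn (G : SimpleGraph V) (W Ω D : Set V) : Prop :=
  D.Nonempty ∧ D ⊆ W ∧ Disjoint D Ω ∧ (G.induce D).Connected ∧
    ∀ v ∈ D, ∀ x ∈ W, G.Adj v x → x ∉ Ω → x ∈ D

/-- The open neighborhood of `D` inside the ground set `W`. -/
def nbhdIn (G : SimpleGraph V) (W D : Set V) : Set V :=
  {v ∈ W | v ∉ D ∧ ∃ d ∈ D, G.Adj v d}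

/-- `Ω` is a potential maximal clique of the graph induced by `G` on the ground set `W`. -/
def IsPMCIn (G : SimpleGraph V) (W Ω : Set V) : Prop :=
  Ω ⊆ W ∧
  (∀ D : Set V, IsCompIn G W Ω D → nbhdIn G W D ≠ Ω) ∧
  (∀ u ∈ Ω, ∀ v ∈ Ω, u ≠ v → ¬ G.Adj u v →
    ∃ D : Set V, IsCompIn G W Ω D ∧ u ∈ nbhdIn G W D ∧ v ∈ nbhdIn G W D)

/-!
Let `D_w` be the component of `G - Ω'` containing `w`. The components of `(G - w) - Ω'` are exactly
the components of `G - (Ω' ∪ {w})`, and each of them lies in a component of `G - Ω'`; hence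
`Ω' ∪ {w}` never has a full component, and `Ω'` always satisfies (PMC2) in `G`.

If `N(D_w) = Ω'`, then `D_w` is full, so `Ω'` is not a PMC of `G`, while `Ω' ∪ {w}` is: a non-edge
`uw` is covered by the component of `G - (Ω' ∪ {w})` through a neighbour of `u` in `D_w`, since a
path inside `D_w` leads from there to `w`.
If `N(D_w) ≠ Ω'`, then `D_w`, the only component of `G - Ω'` that is not one of `G - (Ω' ∪ {w})`,
is not full, so `Ω'` is a PMC of `G`; but for `u ∈ Ω' \ N(D_w)` the non-edge `uw` is covered by no
component of `G - (Ω' ∪ {w})`, because each one that sees `w` lies in `D_w`.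
-/

section

variable {G : SimpleGraph V}

/-- For `a ∉ Ω`, the vertex set of the component of `G - Ω` containing `a`. -/
def avoidingComp (G : SimpleGraph V) (Ω : Set V) (a : V) : Set V :=
  {v | ∃ p : G.Walk a v, ∀ x ∈ p.support, x ∉ Ω}

lemma mem_avoidingComp_self {Ω : Set V} {a : V} (ha : a ∉ Ω) : a ∈ avoidingComp G Ω a :=
  ⟨.nil, by simpa using ha⟩

lemma notMem_of_mem_avoidingComp {Ω : Set V} {a v : V} (hv : v ∈ avoidingComp G Ω a) :
    v ∉ Ω := by
  obtain ⟨p, hp⟩ := hv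
  exact hp v p.end_mem_support

lemma mem_avoidingComp_of_adj {Ω : Set V} {a v x : V} (hv : v ∈ avoidingComp G Ω a)
    (hadj : G.Adj v x) (hx : x ∉ Ω) : x ∈ avoidingComp G Ω a := by
  obtain ⟨p, hp⟩ := hv
  refine ⟨p.concat hadj, fun y hy => ?_⟩
  rw [Walk.support_concat, List.mem_append, List.mem_singleton] at hy
  rcases hy with hy | rfl
  exacts [hp y hy, hx]

lemma avoidingComp_subset_of_adj {Ω : Set V} {a b : V} (ha : a ∉ Ω) (hadj : G.Adj a b) :
    avoidingComp G Ω b ⊆ avoidingComp G Ω a := by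
  rintro v ⟨p, hp⟩
  refine ⟨.cons hadj p, fun x hx => ?_⟩
  rw [Walk.support_cons, List.mem_cons] at hx
  rcases hx with rfl | hx
  exacts [ha, hp x hx]

lemma avoidingComp_anti {Ω Ω₂ : Set V} (h : Ω ⊆ Ω₂) (a : V) :
    avoidingComp G Ω₂ a ⊆ avoidingComp G Ω a :=
  fun _ ⟨p, hp⟩ => ⟨p, fun x hx hxΩ => hp x hx (h hxΩ)⟩

lemma support_subset_avoidingComp {Ω : Set V} {a v : V} {p : G.Walk a v}
    (hp : ∀ x ∈ p.support, x ∉ Ω) : ∀ x ∈ p.support, x ∈ avoidingComp G Ω a := by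
  classical
  exact fun x hx =>
    ⟨p.takeUntil x hx, fun y hy => hp y (p.support_takeUntil_subset_support hx hy)⟩

lemma isCompIn_avoidingComp {Ω : Set V} {a : V} (ha : a ∉ Ω) :
    IsCompIn G Set.univ Ω (avoidingComp G Ω a) := by
  refine ⟨⟨a, mem_avoidingComp_self ha⟩, Set.subset_univ _,
    Set.disjoint_left.mpr fun _ => notMem_of_mem_avoidingComp, ?_,
    fun v hv x _ => mem_avoidingComp_of_adj hv⟩
  rw [connected_iff_exists_forall_reachable]
  refine ⟨⟨a, mem_avoidingComp_self ha⟩, fun ⟨v, p, hp⟩ => ?_⟩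
  exact ⟨p.induce _ (support_subset_avoidingComp hp)⟩

lemma nbhdIn_avoidingComp_subset (Ω : Set V) (a : V) :
    nbhdIn G Set.univ (avoidingComp G Ω a) ⊆ Ω := by
  rintro v ⟨-, hv, d, hd, hadj⟩
  by_contra hvΩ
  exact hv (mem_avoidingComp_of_adj hd hadj.symm hvΩ)

lemma support_map_induce_subset {s : Set V} {a b : s} (p : (G.induce s).Walk a b) :
    ∀ x ∈ (p.map (Embedding.induce s).toHom).support, x ∈ s := by
  intro x hx
  rw [Walk.support_map] at hx
  obtain ⟨y, -, rfl⟩ := List.mem_map.mp hx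
  exact y.2

lemma IsCompIn.eq_avoidingComp {Ω D : Set V} {a : V} (hD : IsCompIn G Set.univ Ω D)
    (ha : a ∈ D) : D = avoidingComp G Ω a := by
  obtain ⟨-, -, hdisj, hconn, hclosed⟩ := hD
  apply Set.Subset.antisymm
  · intro d hd
    obtain ⟨p⟩ := hconn.preconnected ⟨a, ha⟩ ⟨d, hd⟩
    exact ⟨_, fun x hx => Set.disjoint_left.mp hdisj (support_map_induce_subset p x hx)⟩
  · rintro v ⟨p, hp⟩
    induction p with
    | nil => exact ha
    | cons hadj p ih =>
      exact ih (hclosed _ ha _ (Set.mem_univ _) hadj (hp _ (by simp)))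
        (fun x hx => hp x (by simp [hx]))

lemma mem_nbhdIn_avoidingComp_of_walk {Ω : Set V} {d w : V} (p : G.Walk d w)
    (hp : ∀ x ∈ p.support, x ∉ Ω) (hd : d ≠ w) :
    w ∈ nbhdIn G Set.univ (avoidingComp G (Ω ∪ {w}) d) := by
  induction p with
  | nil => exact absurd rfl hd
  | @cons d b w hadj q ih =>
    have hdΩ : d ∉ Ω ∪ {w} := by
      rintro (hdΩ | rfl)
      exacts [hp d (by simp) hdΩ, hd rfl]
    have hw : w ∉ avoidingComp G (Ω ∪ {w}) d := fun hw =>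
      notMem_of_mem_avoidingComp hw (Or.inr rfl)
    by_cases hb : b = w
    · subst hb
      exact ⟨Set.mem_univ _, hw, d, mem_avoidingComp_self hdΩ, hadj.symm⟩
    · obtain ⟨-, -, y, hy, hyw⟩ := ih (fun x hx => hp x (by simp [hx])) hb
      exact ⟨Set.mem_univ _, hw, y, avoidingComp_subset_of_adj hdΩ hadj hy, hyw⟩

lemma mem_nbhdIn_of_subset {W D D₂ : Set V} {u : V} (hsub : D ⊆ D₂) (hu : u ∈ nbhdIn G W D)
    (hu₂ : u ∉ D₂) : u ∈ nbhdIn G W D₂ := by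
  obtain ⟨huW, -, d, hd, hadj⟩ := hu
  exact ⟨huW, hu₂, d, hsub hd, hadj⟩

lemma nbhdIn_eq_inter (W D : Set V) : nbhdIn G W D = nbhdIn G Set.univ D ∩ W := by
  ext v
  simp only [nbhdIn, Set.mem_ofPred_eq, Set.mem_inter_iff, Set.mem_univ, true_and]
  tauto

lemma isCompIn_iff_univ {W Ω D : Set V} :
    IsCompIn G W Ω D ↔ IsCompIn G Set.univ (Ω ∪ Wᶜ) D := by
  simp only [IsCompIn, Set.subset_univ, Set.mem_univ, true_implies, true_and,
    Set.disjoint_union_right, Set.disjoint_compl_right_iff_subset, Set.mem_union,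
    Set.mem_compl_iff, not_or, not_not]
  constructor
  · rintro ⟨hne, hW, hΩ, hconn, hcl⟩
    exact ⟨hne, ⟨hΩ, hW⟩, hconn, fun v hv x hadj ⟨hx, hxW⟩ => hcl v hv x hxW hadj hx⟩
  · rintro ⟨hne, ⟨hΩ, hW⟩, hconn, hcl⟩
    exact ⟨hne, hW, hΩ, hconn, fun v hv x hxW hadj hx => hcl v hv x hadj ⟨hx, hxW⟩⟩

/-- Condition (PMC1). -/
def NoFullComp (G : SimpleGraph V) (W Ω : Set V) : Prop :=
  ∀ D, IsCompIn G W Ω D → nbhdIn G W D ≠ Ω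

/-- Condition (PMC2). -/
def CoversNonEdges (G : SimpleGraph V) (W Ω : Set V) : Prop :=
  ∀ u ∈ Ω, ∀ v ∈ Ω, u ≠ v → ¬ G.Adj u v →
    ∃ D, IsCompIn G W Ω D ∧ u ∈ nbhdIn G W D ∧ v ∈ nbhdIn G W D

variable {w : V} {Ω : Set V}

lemma notMem_of_isPMCIn_compl_singleton (h : IsPMCIn G ({w} : Set V)ᶜ Ω) : w ∉ Ω :=
  fun hw => h.1 hw rfl

lemma IsCompIn.union_singleton {D : Set V} (hD : IsCompIn G Set.univ Ω D) (hw : w ∉ D) :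
    IsCompIn G Set.univ (Ω ∪ {w}) D := by
  obtain ⟨hne, -, hdisj, hconn, hcl⟩ := hD
  refine ⟨hne, Set.subset_univ _, ?_, hconn, fun v hv x hx hadj hxΩ => hcl v hv x hx hadj ?_⟩
  · exact Set.disjoint_union_right.mpr ⟨hdisj, Set.disjoint_singleton_right.mpr hw⟩
  · exact fun h => hxΩ (Or.inl h)

lemma noFullComp_union_singleton (h : IsPMCIn G ({w} : Set V)ᶜ Ω) :
    NoFullComp G Set.univ (Ω ∪ {w}) := by
  intro D hD hfull
  apply h.2.1 D (isCompIn_iff_univ.mpr (by rwa [compl_compl]))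
  rw [nbhdIn_eq_inter, hfull, Set.union_inter_distrib_right, Set.inter_compl_self,
    Set.union_empty, Set.inter_eq_left, Set.subset_compl_singleton_iff]
  exact notMem_of_isPMCIn_compl_singleton h

lemma exists_isCompIn_union_singleton_of_not_adj (h : IsPMCIn G ({w} : Set V)ᶜ Ω) {u v : V}
    (hu : u ∈ Ω) (hv : v ∈ Ω) (huv : u ≠ v) (hadj : ¬ G.Adj u v) :
    ∃ D, IsCompIn G Set.univ (Ω ∪ {w}) D ∧ u ∈ nbhdIn G Set.univ D ∧ v ∈ nbhdIn G Set.univ D := by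
  obtain ⟨D, hD, huD, hvD⟩ := h.2.2 u hu v hv huv hadj
  rw [isCompIn_iff_univ, compl_compl] at hD
  rw [nbhdIn_eq_inter] at huD hvD
  exact ⟨D, hD, huD.1, hvD.1⟩

lemma coversNonEdges_univ (h : IsPMCIn G ({w} : Set V)ᶜ Ω) : CoversNonEdges G Set.univ Ω := by
  intro u hu v hv huv hadj
  obtain ⟨D, hD, huD, hvD⟩ := exists_isCompIn_union_singleton_of_not_adj h hu hv huv hadj
  obtain ⟨d, hd⟩ := hD.1
  have hdΩ : d ∉ Ω := fun hdΩ => Set.disjoint_left.mp hD.2.2.1 hd (Or.inl hdΩ)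
  have hsub : D ⊆ avoidingComp G Ω d :=
    hD.eq_avoidingComp hd ▸ avoidingComp_anti Set.subset_union_left d
  exact ⟨_, isCompIn_avoidingComp hdΩ,
    mem_nbhdIn_of_subset hsub huD fun hu' => notMem_of_mem_avoidingComp hu' hu,
    mem_nbhdIn_of_subset hsub hvD fun hv' => notMem_of_mem_avoidingComp hv' hv⟩

lemma exists_isCompIn_union_singleton_of_mem_nbhdIn {u : V}
    (hu : u ∈ nbhdIn G Set.univ (avoidingComp G Ω w)) (huΩ : u ∈ Ω) (huw : ¬ G.Adj u w) :
    ∃ D, IsCompIn G Set.univ (Ω ∪ {w}) D ∧ u ∈ nbhdIn G Set.univ D ∧ w ∈ nbhdIn G Set.univ D := by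
  obtain ⟨-, -, d, ⟨p, hp⟩, hud⟩ := hu
  have hdw : d ≠ w := by rintro rfl; exact huw hud
  have hdΩ : d ∉ Ω ∪ {w} := by
    rintro (hdΩ | rfl)
    exacts [hp d p.end_mem_support hdΩ, hdw rfl]
  refine ⟨_, isCompIn_avoidingComp hdΩ, ⟨Set.mem_univ u, ?_, d, mem_avoidingComp_self hdΩ, hud⟩,
    mem_nbhdIn_avoidingComp_of_walk p.reverse (by simpa using hp) hdw⟩
  exact fun hu' => notMem_of_mem_avoidingComp hu' (Or.inl huΩ)

lemma coversNonEdges_union_singleton (h : IsPMCIn G ({w} : Set V)ᶜ Ω)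
    (hfull : nbhdIn G Set.univ (avoidingComp G Ω w) = Ω) :
    CoversNonEdges G Set.univ (Ω ∪ {w}) := by
  rintro u (hu | rfl) v (hv | rfl) huv hadj
  · exact exists_isCompIn_union_singleton_of_not_adj h hu hv huv hadj
  · exact exists_isCompIn_union_singleton_of_mem_nbhdIn (hfull.symm ▸ hu) hu hadj
  · obtain ⟨D, hD, hvD, huD⟩ :=
      exists_isCompIn_union_singleton_of_mem_nbhdIn (hfull.symm ▸ hv) hv (fun h => hadj h.symm)
    exact ⟨D, hD, huD, hvD⟩
  · exact absurd rfl huv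

lemma noFullComp_univ (h : IsPMCIn G ({w} : Set V)ᶜ Ω)
    (hfull : nbhdIn G Set.univ (avoidingComp G Ω w) ≠ Ω) : NoFullComp G Set.univ Ω := by
  intro D hD hDfull
  by_cases hwD : w ∈ D
  · exact hfull (hD.eq_avoidingComp hwD ▸ hDfull)
  · apply h.2.1 D (isCompIn_iff_univ.mpr (by rw [compl_compl]; exact hD.union_singleton hwD))
    rw [nbhdIn_eq_inter, hDfull, Set.inter_eq_left, Set.subset_compl_singleton_iff]
    exact notMem_of_isPMCIn_compl_singleton h

lemma not_coversNonEdges_union_singleton (hw : w ∉ Ω)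
    (hfull : nbhdIn G Set.univ (avoidingComp G Ω w) ≠ Ω) :
    ¬ CoversNonEdges G Set.univ (Ω ∪ {w}) := by
  intro hcov
  obtain ⟨u, hu, huN⟩ : ∃ u ∈ Ω, u ∉ nbhdIn G Set.univ (avoidingComp G Ω w) :=
    Set.not_subset.mp fun h => hfull (nbhdIn_avoidingComp_subset Ω w |>.antisymm h)
  have huw : u ≠ w := by rintro rfl; exact hw hu
  have hadj : ¬ G.Adj u w := fun hadj =>
    huN ⟨Set.mem_univ u, fun hu' => notMem_of_mem_avoidingComp hu' hu, w,
      mem_avoidingComp_self hw, hadj⟩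
  obtain ⟨D, hD, huD, ⟨-, -, y, hy, hwy⟩⟩ := hcov u (Or.inl hu) w (Or.inr rfl) huw hadj
  have hsub : D ⊆ avoidingComp G Ω w := calc
    D = avoidingComp G (Ω ∪ {w}) y := hD.eq_avoidingComp hy
    _ ⊆ avoidingComp G Ω y := avoidingComp_anti Set.subset_union_left y
    _ ⊆ avoidingComp G Ω w := avoidingComp_subset_of_adj hw hwy
  exact huN (mem_nbhdIn_of_subset hsub huD fun hu' => notMem_of_mem_avoidingComp hu' hu)

end

theorem statement_6_general (G : SimpleGraph V) (w : V) (Ω' : Set V)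
    (h : IsPMCIn G ({w} : Set V)ᶜ Ω') :
    Xor' (IsPMCIn G Set.univ Ω') (IsPMCIn G Set.univ (Ω' ∪ {w})) := by
  have hw := notMem_of_isPMCIn_compl_singleton h
  by_cases hfull : nbhdIn G Set.univ (avoidingComp G Ω' w) = Ω'
  · refine Or.inr ⟨⟨Set.subset_univ _, noFullComp_union_singleton h,
      coversNonEdges_union_singleton h hfull⟩, fun hΩ' => ?_⟩
    exact hΩ'.2.1 _ (isCompIn_avoidingComp hw) hfull
  · refine Or.inl ⟨⟨Set.subset_univ _, noFullComp_univ h hfull, coversNonEdges_univ h⟩,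
      fun hΩ' => ?_⟩
    exact not_coversNonEdges_union_singleton hw hfull hΩ'.2.2

/-- PMC lifting: if `Ω'` is a PMC of `G - w`, then exactly one of `Ω'` and `Ω' ∪ {w}`
is a PMC of `G`. -/
theorem statement_6 [Fintype V] (G : SimpleGraph V) (w : V) (Ω' : Set V)
    (h : IsPMCIn G ({w} : Set V)ᶜ Ω') :
    Xor' (IsPMCIn G Set.univ Ω') (IsPMCIn G Set.univ (Ω' ∪ {w})) :=
  statement_6_general G w Ω' h
end

section
/- Let G be a P₆-free graph, Ω a potential maximal clique in G, and D₁, D₂ two distinct connected components of G − Ω. Then either every vertex of N(D₁) \ N(D₂) is adjacent to all of D₁, or every vertex of N(D₂) \ N(D₁) is adjacent to all of D₂. -/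
open SimpleGraph

variable {V : Type*}

/-- A graph is `P₆`-free if it contains no induced path on 6 vertices. -/
def P6Free (G : SimpleGraph V) : Prop :=
  IsEmpty (pathGraph 6 ↪g G)

/-- `Ω` is a potential maximal clique of `G`. -/
def IsPMC (G : SimpleGraph V) (Ω : Set V) : Prop :=
  (∀ D : Set V, IsCompOf G Ω D → nbhd G D ≠ Ω) ∧
  (∀ u ∈ Ω, ∀ v ∈ Ω, u ≠ v → ¬ G.Adj u v →
    ∃ D : Set V, IsCompOf G Ω D ∧ u ∈ nbhd G D ∧ v ∈ nbhd G D)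

/-!
Suppose `v₁ ∈ N(D₁) \ N(D₂)` misses `b ∈ D₁` and `v₂ ∈ N(D₂) \ N(D₁)` misses `e ∈ D₂`. In the
subgraph induced by `(V \ Ω) ∪ {v₁, v₂}` there is a walk from `b` through `D₁` to `v₁`, then to
`v₂` (directly, or through the component of `G - Ω` that the potential maximal clique `Ω` provides
for the non-edge `v₁v₂`), then through `D₂` to `e`. Every such walk has length at least 5, since
edges only join equal or consecutive layers of `D₁ \ N(v₁), D₁ ∩ N(v₁), {v₁}, (rest),
D₂ ∩ N(v₂), D₂ \ N(v₂)`. So the first six vertices of a shortest `b`–`e` walk induce a `P₆`.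
-/

namespace SimpleGraph.Walk

variable {W : Type*} {H : SimpleGraph W} {u v : W}

lemma getVert_ne_and_not_adj_of_length_eq_dist {p : H.Walk u v} (hp : p.length = H.dist u v)
    {i j : ℕ} (hij : i + 1 < j) (hj : j ≤ p.length) :
    p.getVert i ≠ p.getVert j ∧ ¬ H.Adj (p.getVert i) (p.getVert j) := by
  have no_shortcut (q : H.Walk (p.getVert i) (p.getVert j)) (hq : q.length ≤ 1) : False := by
    have := H.dist_le (((p.take i).append q).append (p.drop j))
    simp only [length_append, take_length, drop_length] at this
    omega
  exact ⟨fun h => no_shortcut (nil.copy rfl h) (by simp), fun h => no_shortcut h.toWalk (by simp)⟩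

lemma nonempty_pathGraph_embedding_of_length_eq_dist {p : H.Walk u v}
    (hp : p.length = H.dist u v) {n : ℕ} (hn : n ≤ p.length + 1) :
    Nonempty (pathGraph n ↪g H) := by
  have forward (i j : Fin n) (hij : i < j) :
      p.getVert i ≠ p.getVert j ∧ (H.Adj (p.getVert i) (p.getVert j) ↔ i.val + 1 = j) := by
    by_cases hsucc : i.val + 1 = j
    · have hadj : H.Adj (p.getVert i) (p.getVert j) := hsucc ▸ p.adj_getVert_succ (by omega)
      exact ⟨hadj.ne, iff_of_true hadj hsucc⟩
    · obtain ⟨hne, hnadj⟩ := getVert_ne_and_not_adj_of_length_eq_dist hp (i := i) (j := j)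
        (by omega) (by omega)
      exact ⟨hne, iff_of_false hnadj hsucc⟩
  refine ⟨⟨⟨fun i => p.getVert i, fun i j hij => ?_⟩, fun {i j} => ?_⟩⟩
  · by_contra hne
    rcases lt_or_gt_of_ne hne with h | h
    · exact (forward i j h).1 hij
    · exact (forward j i h).1 hij.symm
  · change H.Adj (p.getVert i) (p.getVert j) ↔ (pathGraph n).Adj i j
    rw [pathGraph_adj]
    rcases lt_trichotomy i j with h | rfl | h
    · rw [(forward i j h).2]; omega
    · simp
    · rw [H.adj_comm, (forward j i h).2]; omega

lemma le_add_length_of_forall_adj (ℓ : W → ℕ) (hℓ : ∀ x y, H.Adj x y → ℓ y ≤ ℓ x + 1)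
    (p : H.Walk u v) : ℓ v ≤ ℓ u + p.length := by
  induction p with
  | nil => simp
  | cons h _ ih =>
    have := hℓ _ _ h
    rw [length_cons]
    omega

end SimpleGraph.Walk

namespace IsCompOf

variable {G : SimpleGraph V} {S D D' T : Set V}

lemma nbhd_subset_s9 (hD : IsCompOf G S D) : nbhd G D ⊆ S := by
  rintro v ⟨hvD, d, hd, hvd⟩
  by_contra hvS
  exact hvD (hD.2.2.2 d hd v hvd.symm hvS)

lemma subset_of_mem_of_mem (hD : IsCompOf G S D) (hD' : IsCompOf G S D') {x : V}
    (hx : x ∈ D) (hx' : x ∈ D') : D ⊆ D' := by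
  intro y hy
  obtain ⟨p⟩ := hD.2.2.1.preconnected ⟨x, hx⟩ ⟨y, hy⟩
  suffices stays_in_D' : ∀ {a b : D}, (G.induce D).Walk a b → (a : V) ∈ D' → (b : V) ∈ D' from
    stays_in_D' p hx'
  intro a b q
  induction q with
  | nil => exact id
  | cons hadj _ ih =>
    exact fun ha => ih (hD'.2.2.2 _ ha _ hadj (Set.disjoint_left.mp hD.2.1 (Subtype.prop _)))

lemma disjoint_s9 (hD : IsCompOf G S D) (hD' : IsCompOf G S D') (hne : D ≠ D') : Disjoint D D' :=
  Set.disjoint_left.mpr fun _ hx hx' =>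
    hne ((hD.subset_of_mem_of_mem hD' hx hx').antisymm (hD'.subset_of_mem_of_mem hD hx' hx))

lemma reachable_induce_of_mem_nbhd (hD : IsCompOf G S D) (hDT : D ⊆ T) {x v : V} (hx : x ∈ D)
    (hv : v ∈ nbhd G D) {hxT : x ∈ T} {hvT : v ∈ T} :
    (G.induce T).Reachable ⟨x, hxT⟩ ⟨v, hvT⟩ := by
  obtain ⟨-, d, hd, hvd⟩ := hv
  obtain ⟨p⟩ := hD.2.2.1.preconnected ⟨x, hx⟩ ⟨d, hd⟩
  have hxd : (G.induce T).Reachable ⟨x, hxT⟩ ⟨d, hDT hd⟩ := ⟨p.map (G.induceHomOfLE hDT).toHom⟩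
  exact hxd.trans (Adj.reachable (G := G.induce T) hvd.symm)

end IsCompOf

section TwoComponents

variable {G : SimpleGraph V} {Ω D₁ D₂ : Set V} {v₁ v₂ b e : V}

lemma reachable_induce_compl_union_pair (hΩ : IsPMC G Ω) (hD₁ : IsCompOf G Ω D₁)
    (hD₂ : IsCompOf G Ω D₂) (hv₁N₁ : v₁ ∈ nbhd G D₁) (hv₂N₂ : v₂ ∈ nbhd G D₂)
    (hv₂N₁ : v₂ ∉ nbhd G D₁) (hb : b ∈ D₁) (he : e ∈ D₂) {hbT : b ∈ Ωᶜ ∪ {v₁, v₂}}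
    {heT : e ∈ Ωᶜ ∪ {v₁, v₂}} :
    (G.induce (Ωᶜ ∪ {v₁, v₂})).Reachable ⟨b, hbT⟩ ⟨e, heT⟩ := by
  have hcompl {D : Set V} (hD : IsCompOf G Ω D) : D ⊆ Ωᶜ ∪ {v₁, v₂} :=
    fun _ hx => Or.inl (Set.disjoint_left.mp hD.2.1 hx)
  have hv₁T : v₁ ∈ Ωᶜ ∪ {v₁, v₂} := Or.inr (Or.inl rfl)
  have hv₂T : v₂ ∈ Ωᶜ ∪ {v₁, v₂} := Or.inr (Or.inr rfl)
  have hv₁v₂ : (G.induce (Ωᶜ ∪ {v₁, v₂})).Reachable ⟨v₁, hv₁T⟩ ⟨v₂, hv₂T⟩ := by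
    by_cases hadj : G.Adj v₁ v₂
    · exact Adj.reachable (G := G.induce _) hadj
    have hne : v₁ ≠ v₂ := by rintro rfl; exact hv₂N₁ hv₁N₁
    obtain ⟨D₃, hD₃, hv₁N₃, hv₂N₃⟩ :=
      hΩ.2 v₁ (hD₁.nbhd_subset_s9 hv₁N₁) v₂ (hD₂.nbhd_subset_s9 hv₂N₂) hne hadj
    obtain ⟨g, hg⟩ := hD₃.1
    exact (hD₃.reachable_induce_of_mem_nbhd (hcompl hD₃) hg hv₁N₃ (hxT := hcompl hD₃ hg)).symm.trans
      (hD₃.reachable_induce_of_mem_nbhd (hcompl hD₃) hg hv₂N₃)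
  exact (hD₁.reachable_induce_of_mem_nbhd (hcompl hD₁) hb hv₁N₁).trans
    (hv₁v₂.trans (hD₂.reachable_induce_of_mem_nbhd (hcompl hD₂) he hv₂N₂).symm)

lemma five_le_length_of_walk_induce_compl_union_pair (hD₁ : IsCompOf G Ω D₁)
    (hD₂ : IsCompOf G Ω D₂) (hne : D₁ ≠ D₂) (hv₁Ω : v₁ ∈ Ω) (hv₂Ω : v₂ ∈ Ω)
    (hv₁N₂ : v₁ ∉ nbhd G D₂) (hv₂N₁ : v₂ ∉ nbhd G D₁) (hb : b ∈ D₁) (hv₁b : ¬ G.Adj v₁ b)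
    (he : e ∈ D₂) (hv₂e : ¬ G.Adj v₂ e) {hbT : b ∈ Ωᶜ ∪ {v₁, v₂}} {heT : e ∈ Ωᶜ ∪ {v₁, v₂}}
    (p : (G.induce (Ωᶜ ∪ {v₁, v₂})).Walk ⟨b, hbT⟩ ⟨e, heT⟩) : 5 ≤ p.length := by
  classical
  let level (z : V) : ℕ :=
    if z ∈ D₁ then (if G.Adj v₁ z then 1 else 0)
    else if z ∈ D₂ then (if G.Adj v₂ z then 4 else 5)
    else if z = v₁ then 2 else 3
  have hD₁D₂ := hD₁.disjoint_s9 hD₂ hne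
  have hD₁Ω : ∀ z ∈ D₁, z ∉ Ω := fun _ h => Set.disjoint_left.mp hD₁.2.1 h
  have hD₂Ω : ∀ z ∈ D₂, z ∉ Ω := fun _ h => Set.disjoint_left.mp hD₂.2.1 h
  have hT₁ : ∀ w ∈ Ωᶜ ∪ {v₁, v₂}, w ∈ nbhd G D₁ → w = v₁ := by
    rintro w (hw | rfl | rfl) hwN
    · exact absurd (hD₁.nbhd_subset_s9 hwN) hw
    · rfl
    · exact absurd hwN hv₂N₁
  have hT₂ : ∀ w ∈ Ωᶜ ∪ {v₁, v₂}, w ∈ nbhd G D₂ → w = v₂ := by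
    rintro w (hw | rfl | rfl) hwN
    · exact absurd (hD₂.nbhd_subset_s9 hwN) hw
    · exact absurd hwN hv₁N₂
    · rfl
  have hstep : ∀ z w : ↥(Ωᶜ ∪ {v₁, v₂}), G.Adj z w → level w ≤ level z + 1 := by
    rintro ⟨z, hz⟩ ⟨w, hw⟩ hzw
    have hzw' : G.Adj w z := hzw.symm
    have h1 : z ∈ D₁ → w ∉ D₁ → w ∈ nbhd G D₁ := fun h h' => ⟨h', z, h, hzw'⟩
    have h1' : w ∈ D₁ → z ∉ D₁ → z ∈ nbhd G D₁ := fun h h' => ⟨h', w, h, hzw⟩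
    have h2 : z ∈ D₂ → w ∉ D₂ → w ∈ nbhd G D₂ := fun h h' => ⟨h', z, h, hzw'⟩
    have h2' : w ∈ D₂ → z ∉ D₂ → z ∈ nbhd G D₂ := fun h h' => ⟨h', w, h, hzw⟩
    have hdisj : z ∈ D₁ → z ∉ D₂ := fun h => Set.disjoint_left.mp hD₁D₂ h
    have hdisj' : w ∈ D₁ → w ∉ D₂ := fun h => Set.disjoint_left.mp hD₁D₂ h
    have := hT₁ z hz
    have := hT₁ w hw
    have := hT₂ z hz
    have := hT₂ w hw
    simp only [level]
    split_ifs <;> grind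
  simpa only [Function.comp_apply, level, hb, hv₁b, he, hv₂e, Set.disjoint_right.mp hD₁D₂ he,
    ↓reduceIte, zero_add] using p.le_add_length_of_forall_adj (level ∘ Subtype.val) hstep

end TwoComponents

theorem statement_9_general (G : SimpleGraph V) (hP6 : P6Free G)
    (Ω D₁ D₂ : Set V) (hΩ : IsPMC G Ω)
    (hD₁ : IsCompOf G Ω D₁) (hD₂ : IsCompOf G Ω D₂) (hne : D₁ ≠ D₂) :
    (∀ v ∈ nbhd G D₁ \ nbhd G D₂, ∀ d ∈ D₁, G.Adj v d) ∨
    (∀ v ∈ nbhd G D₂ \ nbhd G D₁, ∀ d ∈ D₂, G.Adj v d) := by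
  by_contra! h
  obtain ⟨⟨v₁, ⟨hv₁N₁, hv₁N₂⟩, b, hb, hv₁b⟩, ⟨v₂, ⟨hv₂N₂, hv₂N₁⟩, e, he, hv₂e⟩⟩ := h
  obtain ⟨p, hp⟩ := (reachable_induce_compl_union_pair hΩ hD₁ hD₂ hv₁N₁ hv₂N₂ hv₂N₁ hb he
    (hbT := Or.inl (Set.disjoint_left.mp hD₁.2.1 hb))
    (heT := Or.inl (Set.disjoint_left.mp hD₂.2.1 he))).exists_walk_length_eq_dist
  have hlong := five_le_length_of_walk_induce_compl_union_pair hD₁ hD₂ hne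
    (hD₁.nbhd_subset_s9 hv₁N₁) (hD₂.nbhd_subset_s9 hv₂N₂) hv₁N₂ hv₂N₁ hb hv₁b he hv₂e p
  obtain ⟨f⟩ := p.nonempty_pathGraph_embedding_of_length_eq_dist hp (n := 6) (by omega)
  exact hP6.false ((Embedding.induce _).comp f)

/-- For a PMC `Ω` of a `P₆`-free graph and two distinct components `D₁, D₂` of `G - Ω`,
either `N(D₁) \ N(D₂)` is complete to `D₁`, or `N(D₂) \ N(D₁)` is complete to `D₂`. -/
theorem statement_9 [Fintype V] (G : SimpleGraph V) (hP6 : P6Free G)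
    (Ω D₁ D₂ : Set V) (hΩ : IsPMC G Ω)
    (hD₁ : IsCompOf G Ω D₁) (hD₂ : IsCompOf G Ω D₂) (hne : D₁ ≠ D₂) :
    (∀ v ∈ nbhd G D₁ \ nbhd G D₂, ∀ d ∈ D₁, G.Adj v d) ∨
    (∀ v ∈ nbhd G D₂ \ nbhd G D₁, ∀ d ∈ D₂, G.Adj v d) :=
  statement_9_general G hP6 Ω D₁ D₂ hΩ hD₁ hD₂ hne
end

section
/- Let G be a graph on n vertices. The number of modules M of G such that both the induced subgraph G[M] and its complement are connected is at most 2n − 1. -/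
/-!
A module `M` such that `G[M]` and its complement are connected overlaps no other module `M'`:
otherwise a vertex of `M' \ M` forces `M ∩ M'` and `M \ M'` to be complete or anticomplete to
each other, which disconnects `G[M]` or its complement. Hence these modules form a laminar
family of nonempty subsets of `V`, and a laminar family of nonempty subsets of an `n`-set has at
most `2n - 1` members.
-/

open SimpleGraph

variable {V : Type*}

/-- `M` is a module of `G`. -/
def IsModule (G : SimpleGraph V) (M : Set V) : Prop :=
  M.Nonempty ∧ ∀ v ∉ M, (∀ m ∈ M, G.Adj v m) ∨ (∀ m ∈ M, ¬ G.Adj v m)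

/-- `M` is a proper strong module of `G`. -/
def IsProperStrongModule (G : SimpleGraph V) (M : Set V) : Prop :=
  IsModule G M ∧ M ≠ Set.univ ∧
    ∀ M' : Set V, IsModule G M' → M ⊆ M' ∨ M' ⊆ M ∨ Disjoint M M'

/-- `M` is a maximal proper strong module of `G`. -/
def IsMaxPSM15 (G : SimpleGraph V) (M : Set V) : Prop :=
  IsProperStrongModule G M ∧
    ∀ M' : Set V, IsProperStrongModule G M' → M ⊆ M' → M' = M

variable {α : Type*}

def IsLaminar (F : Finset (Finset α)) : Prop :=
  ∀ S ∈ F, ∀ T ∈ F, S ⊆ T ∨ T ⊆ S ∨ Disjoint S T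

namespace IsLaminar

variable {F : Finset (Finset α)}

theorem mono {F' : Finset (Finset α)} (hF : IsLaminar F) (h : F' ⊆ F) : IsLaminar F' :=
  fun S hS T hT => hF S (h hS) T (h hT)

variable [DecidableEq α]

theorem image_erase (hF : IsLaminar F) (x : α) : IsLaminar (F.image (·.erase x)) := by
  simp only [IsLaminar, Finset.mem_image]
  rintro _ ⟨S, hS, rfl⟩ _ ⟨T, hT, rfl⟩
  rcases hF S hS T hT with h | h | h
  · exact Or.inl (Finset.erase_subset_erase x h)
  · exact Or.inr (Or.inl (Finset.erase_subset_erase x h))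
  · exact Or.inr (Or.inr (h.mono (Finset.erase_subset x S) (Finset.erase_subset x T)))

theorem eq_of_subset_of_erase_mem (hF : IsLaminar F) (hne : ∀ S ∈ F, S.Nonempty) {x : α}
    {S S' : Finset α} (hS : S ∈ F) (hxS : x ∈ S) (hT : S.erase x ∈ F) (hT' : S'.erase x ∈ F)
    (h : S ⊆ S') : S = S' := by
  rcases hF _ hT' S hS with h' | h' | h'
  · refine h.antisymm fun y hy => ?_
    by_cases hyx : y = x
    · exact hyx ▸ hxS
    · exact h' (Finset.mem_erase.2 ⟨hyx, hy⟩)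
  · exact absurd (h' hxS) (Finset.notMem_erase x S')
  · obtain ⟨y, hy⟩ := hne _ hT
    have hyS' : y ∈ S'.erase x := Finset.erase_subset_erase x h hy
    exact absurd (Finset.mem_of_mem_erase hy) (Finset.disjoint_left.1 h' hyS')

theorem card_le_card_image_erase_add_one (hF : IsLaminar F) (hne : ∀ S ∈ F, S.Nonempty)
    (x : α) : F.card ≤ (F.image (·.erase x)).card + 1 := by
  set A := F.filter fun S => ¬ x ∈ S
  set B := F.filter (x ∈ ·)
  have hA : A.image (·.erase x) = A :=
    (Finset.image_congr fun S hS => Finset.erase_eq_of_notMem (Finset.mem_filter.1 hS).2).trans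
      Finset.image_id'
  have hB : (B.image (·.erase x)).card = B.card :=
    Finset.card_image_of_injOn ((Finset.erase_injOn' x).mono fun S hS => (Finset.mem_filter.1 hS).2)
  have hsplit : F.image (·.erase x) = A ∪ B.image (·.erase x) := by
    conv_lhs => rw [← Finset.filter_union_filter_not_eq (x ∈ ·) F]
    rw [Finset.image_union, Finset.union_comm, hA]
  -- the collisions are the `T ∌ x` with `insert x T ∈ F`; laminarity allows at most one
  have hcollide : (A ∩ B.image (·.erase x)).card ≤ 1 := by
    refine Finset.card_le_one.2 fun T hT T' hT' => ?_
    simp only [A, B, Finset.mem_inter, Finset.mem_filter, Finset.mem_image] at hT hT'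
    obtain ⟨⟨hTF, -⟩, S, ⟨hSF, hxS⟩, rfl⟩ := hT
    obtain ⟨⟨hTF', -⟩, S', ⟨hSF', hxS'⟩, rfl⟩ := hT'
    have hSS' : S = S' := by
      rcases hF S hSF S' hSF' with h | h | h
      · exact hF.eq_of_subset_of_erase_mem hne hSF hxS hTF hTF' h
      · exact (hF.eq_of_subset_of_erase_mem hne hSF' hxS' hTF' hTF h).symm
      · exact absurd hxS' (Finset.disjoint_left.1 h hxS)
    rw [hSS']
  have hcard := Finset.card_union_add_card_inter A (B.image (·.erase x))
  have hAB : B.card + A.card = F.card := Finset.card_filter_add_card_filter_not _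
  rw [hsplit]
  omega

/-- Induction on the ground set: erasing a point `x` loses at most two members, the singleton
`{x}` and one collision. -/
theorem card_le_two_mul_card_sub_one {X : Finset α} (hF : IsLaminar F)
    (hne : ∀ S ∈ F, S.Nonempty) (hX : ∀ S ∈ F, S ⊆ X) : F.card ≤ 2 * X.card - 1 := by
  induction X using Finset.induction_on generalizing F with
  | empty =>
    simp only [Finset.subset_empty] at hX
    simp [Finset.eq_empty_of_forall_notMem fun S hS => (hne S hS).ne_empty (hX S hS)]
  | insert x X hx ih =>
    rcases X.eq_empty_or_nonempty with rfl | hXne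
    · refine Finset.card_le_one.2 fun S hS T hT => ?_
      have hsingleton : ∀ S ∈ F, S = {x} := fun S hS =>
        (Finset.subset_singleton_iff.1 (hX S hS)).resolve_left (hne S hS).ne_empty
      rw [hsingleton S hS, hsingleton T hT]
    · set F' := (F.image (·.erase x)).erase ∅
      have hF' : F'.card ≤ 2 * X.card - 1 := by
        refine ih ((hF.image_erase x).mono (Finset.erase_subset _ _)) ?_ ?_
        · intro T hT
          exact Finset.nonempty_iff_ne_empty.2 (Finset.ne_of_mem_erase hT)
        · intro T hT
          obtain ⟨S, hS, rfl⟩ := Finset.mem_image.1 (Finset.mem_of_mem_erase hT)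
          exact Finset.subset_insert_iff.1 (hX S hS)
      have hcollide := hF.card_le_card_image_erase_add_one hne x
      have herase : (F.image (·.erase x)).card - 1 ≤ F'.card := Finset.pred_card_le_card_erase
      have hcardX := Finset.card_insert_of_notMem hx
      have hXpos := hXne.card_pos
      omega

end IsLaminar

theorem Set.ncard_le_two_mul_card_sub_one_of_laminar [Fintype α] {F : Set (Set α)}
    (hne : ∀ S ∈ F, S.Nonempty) (hF : ∀ S ∈ F, ∀ T ∈ F, S ⊆ T ∨ T ⊆ S ∨ Disjoint S T) :
    F.ncard ≤ 2 * Fintype.card α - 1 := by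
  classical
  set F' : Finset (Finset α) := Finset.univ.filter fun A => (A : Set α) ∈ F
  have hF' : F = (↑) '' (F' : Set (Finset α)) := by
    ext S
    refine ⟨fun hS => ⟨S.toFinset, by simpa [F'] using hS, Set.coe_toFinset S⟩, ?_⟩
    rintro ⟨A, hA, rfl⟩
    simpa [F'] using hA
  rw [hF', Set.ncard_image_of_injective _ Finset.coe_injective, Set.ncard_coe_finset]
  refine IsLaminar.card_le_two_mul_card_sub_one (X := Finset.univ) ?_ ?_
    fun _ _ => Finset.subset_univ _
  · intro A hA B hB
    simp only [F', Finset.mem_filter, Finset.mem_univ, true_and] at hA hB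
    simpa only [Finset.coe_subset, Finset.disjoint_coe] using hF _ hA _ hB
  · intro A hA
    simpa [F'] using hne _ (Finset.mem_filter.1 hA).2

theorem SimpleGraph.Preconnected.exists_adj_of_mem_of_notMem {W : Type*} {H : SimpleGraph W}
    (hH : H.Preconnected) {S : Set W} {u v : W} (hu : u ∈ S) (hv : v ∉ S) :
    ∃ x ∈ S, ∃ y ∉ S, H.Adj x y :=
  let ⟨p⟩ := hH u v
  let ⟨d, _, hd₁, hd₂⟩ := p.exists_boundary_dart S hu hv
  ⟨_, hd₁, _, hd₂, d.adj⟩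

namespace IsModule

variable {G : SimpleGraph V} {M M' : Set V}

theorem adj_iff_adj (hM : IsModule G M) {v x y : V} (hv : v ∉ M) (hx : x ∈ M) (hy : y ∈ M) :
    G.Adj v x ↔ G.Adj v y := by
  rcases hM.2 v hv with h | h
  · exact iff_of_true (h x hx) (h y hy)
  · exact iff_of_false (h x hx) (h y hy)

theorem adj_iff_of_mem_diff (hM : IsModule G M) (hM' : IsModule G M') {b c x y : V}
    (hb : b ∈ M') (hbM : b ∉ M) (hc : c ∈ M) (hx : x ∈ M) (hxM' : x ∉ M') (hy : y ∈ M') :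
    G.Adj x y ↔ G.Adj b c :=
  calc G.Adj x y ↔ G.Adj x b := hM'.adj_iff_adj hxM' hy hb
    _ ↔ G.Adj b x := G.adj_comm x b
    _ ↔ G.Adj b c := hM.adj_iff_adj hbM hx hc

theorem subset_or_subset_or_disjoint (hM : IsModule G M) (hconn : (G.induce M).Connected)
    (hcoconn : (G.induce M)ᶜ.Connected) (hM' : IsModule G M') :
    M ⊆ M' ∨ M' ⊆ M ∨ Disjoint M M' := by
  by_contra! h
  obtain ⟨a, haM, haM'⟩ := Set.not_subset.1 h.1
  obtain ⟨b, hbM', hbM⟩ := Set.not_subset.1 h.2.1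
  obtain ⟨c, hcM, hcM'⟩ := Set.not_disjoint_iff.1 h.2.2
  by_cases hbc : G.Adj b c
  · obtain ⟨⟨y, hy⟩, hyM', ⟨x, hx⟩, hxM', hadj⟩ :=
      hcoconn.preconnected.exists_adj_of_mem_of_notMem (S := Subtype.val ⁻¹' M')
        (u := ⟨c, hcM⟩) (v := ⟨a, haM⟩) hcM' haM'
    exact (compl_adj _ _ _ |>.1 hadj).2
      ((hM.adj_iff_of_mem_diff hM' hbM' hbM hcM hx hxM' hyM').2 hbc).symm
  · obtain ⟨⟨y, hy⟩, hyM', ⟨x, hx⟩, hxM', hadj⟩ :=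
      hconn.preconnected.exists_adj_of_mem_of_notMem (S := Subtype.val ⁻¹' M')
        (u := ⟨c, hcM⟩) (v := ⟨a, haM⟩) hcM' haM'
    exact hbc ((hM.adj_iff_of_mem_diff hM' hbM' hbM hcM hx hxM' hyM').1 hadj.symm)

end IsModule

/-- The number of modules `M` of a graph `G` on `n` vertices such that both `G[M]` and
its complement are connected is at most `2n - 1`. -/
theorem statement_15 [Fintype V] (G : SimpleGraph V) :
    {M : Set V | IsModule G M ∧ (G.induce M).Connected ∧
      ((G.induce M)ᶜ).Connected}.ncard ≤ 2 * Fintype.card V - 1 :=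
  Set.ncard_le_two_mul_card_sub_one_of_laminar (fun _ hM => hM.1.1) fun _ hM _ hM' =>
    hM.1.subset_or_subset_or_disjoint hM.2.1 hM.2.2 hM'.1
end
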